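/- arXiv:0910.5439 — 5 statements merged into one kernel-verified Lean document; each statement's English description precedes it below -/
import Mathlib

section
/- Let α ∈ (0,1/2) and u₁(z) = (1/α) K_0(z^α/α). Then for every ξ > 0 and z ≥ ξ^{-1/α}, one has ∫_z^∞ s u₁(s ξ^{1/α})² ds ≤ C z^{2−2α} ξ^{−2} e^{−2 z^α ξ/α}, for a constant C depending only on α. -/
open MeasureTheory

/-- The modified Bessel function of the second kind of order `0`,
via the integral representation `K₀(x) = ∫_0^∞ exp (-x cosh t) dt`. -/
noncomputable def besselK0 (x : ℝ) : ℝ :=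
  ∫ t in Set.Ioi (0 : ℝ), Real.exp (-x * Real.cosh t)

/-! Under the integral, `cosh t ≥ 1 + t²/2` turns `K₀` into a Gaussian integral, giving
`K₀(x)² ≤ π/(2x) e^{-2x}`; hence the integrand is at most `π/(2αξ) s^{1-α} e^{-2ξ s^α/α}`.
For `s ≥ z ≥ ξ^{-1/α}` we have `s^{-α} ≤ ξ`, so the derivative of `-s^{2-2α} e^{-2ξ s^α/α}`
dominates `2αξ s^{1-α} e^{-2ξ s^α/α}`, and the tail integral is bounded by the boundary term
at `z`. This gives `C = π/(4α²)`. -/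

open Real Filter Set

lemma one_add_sq_div_two_le_cosh (t : ℝ) : 1 + t ^ 2 / 2 ≤ cosh t := by
  have hhalf : cosh t = 1 + 2 * sinh (t / 2) ^ 2 := by
    rw [← mul_div_cancel₀ t two_ne_zero, cosh_two_mul, cosh_sq]
    ring_nf
  have habs : |t / 2| ≤ |sinh (t / 2)| := by
    rw [abs_sinh]
    exact self_le_sinh_iff.2 (abs_nonneg _)
  nlinarith [sq_le_sq.2 habs]

lemma besselK0_nonneg (x : ℝ) : 0 ≤ besselK0 x :=
  integral_nonneg fun _ => (exp_pos _).le

lemma besselK0_le {x : ℝ} (hx : 0 < x) : besselK0 x ≤ √(π / (x / 2)) / 2 * exp (-x) := by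
  have hgauss : IntegrableOn (fun t : ℝ => exp (-(x / 2) * t ^ 2)) (Ioi 0) :=
    integrableOn_Ioi_exp_neg_mul_sq_iff.2 (by linarith)
  calc besselK0 x ≤ ∫ t in Ioi (0 : ℝ), exp (-(x / 2) * t ^ 2) * exp (-x) := by
        refine integral_mono_of_nonneg (ae_of_all _ fun _ => (exp_pos _).le)
          (hgauss.mul_const _) (ae_of_all _ fun t => ?_)
        simp only [← exp_add]
        gcongr
        nlinarith [one_add_sq_div_two_le_cosh t]
    _ = √(π / (x / 2)) / 2 * exp (-x) := by
        rw [integral_mul_const, integral_gaussian_Ioi]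

lemma besselK0_sq_le {x : ℝ} (hx : 0 < x) : besselK0 x ^ 2 ≤ π / (2 * x) * exp (-(2 * x)) := by
  calc besselK0 x ^ 2 ≤ (√(π / (x / 2)) / 2 * exp (-x)) ^ 2 := by
        gcongr
        exacts [besselK0_nonneg x, besselK0_le hx]
    _ = π / (2 * x) * exp (-(2 * x)) := by
        rw [mul_pow, div_pow, sq_sqrt (by positivity), ← exp_nat_mul]
        field_simp
        ring_nf

section RpowMulExp

variable {m a c : ℝ}

lemma hasDerivAt_rpow_mul_exp_neg_mul_rpow {s : ℝ} (hs : 0 < s) :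
    HasDerivAt (fun s => s ^ m * exp (-c * s ^ a))
      ((m * s ^ (m - 1) - c * a * s ^ (m + a - 1)) * exp (-c * s ^ a)) s := by
  have hpow (p : ℝ) : HasDerivAt (fun s : ℝ => s ^ p) (p * s ^ (p - 1)) s :=
    hasDerivAt_rpow_const (Or.inl hs.ne')
  refine ((hpow m).mul ((hpow a).const_mul (-c)).exp).congr_deriv ?_
  rw [show m + a - 1 = m + (a - 1) by ring, rpow_add hs]
  ring

lemma tendsto_rpow_mul_exp_neg_mul_rpow (ha : 0 < a) (hc : 0 < c) :
    Tendsto (fun s : ℝ => s ^ m * exp (-c * s ^ a)) atTop (nhds 0) := by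
  refine ((tendsto_rpow_mul_exp_neg_mul_atTop_nhds_zero (m / a) c hc).comp
    (tendsto_rpow_atTop ha)).congr' ?_
  filter_upwards [eventually_gt_atTop 0] with s hs
  rw [Function.comp_apply, ← rpow_mul hs.le, mul_div_cancel₀ m ha.ne']

lemma integral_Ioi_rpow_mul_exp_neg_mul_rpow_le {κ z : ℝ} (ha : 0 < a) (hm : 0 ≤ m)
    (hz : 0 < z) (hκ : 0 < κ) (hslack : m * z ^ (-a) ≤ c * a - κ) :
    ∫ s in Ioi z, s ^ (m + a - 1) * exp (-c * s ^ a) ≤ κ⁻¹ * (z ^ m * exp (-c * z ^ a)) := by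
  have hc : 0 < c := by
    have : 0 < c * a := by nlinarith [rpow_pos_of_pos hz (-a)]
    exact pos_of_mul_pos_left this ha.le
  set F' : ℝ → ℝ := fun s => -((m * s ^ (m - 1) - c * a * s ^ (m + a - 1)) * exp (-c * s ^ a))
  have hderiv : ∀ s ∈ Ici z, HasDerivAt (fun s => -(s ^ m * exp (-c * s ^ a))) (F' s) s :=
    fun s hs => (hasDerivAt_rpow_mul_exp_neg_mul_rpow (lt_of_lt_of_le hz hs)).neg
  have hlower : ∀ s ∈ Ioi z, κ * (s ^ (m + a - 1) * exp (-c * s ^ a)) ≤ F' s := by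
    intro s hs
    have hs0 : 0 < s := hz.trans hs
    have hsplit : s ^ (m - 1) = s ^ (m + a - 1) * s ^ (-a) := by
      rw [← rpow_add hs0]; ring_nf
    have hdecay : s ^ (-a) ≤ z ^ (-a) := rpow_le_rpow_of_nonpos hz hs.le (by linarith)
    have hq := rpow_pos_of_pos hs0 (m + a - 1)
    have : κ * s ^ (m + a - 1) ≤ c * a * s ^ (m + a - 1) - m * s ^ (m - 1) := by
      rw [hsplit]
      nlinarith [mul_le_mul_of_nonneg_left hdecay hm]
    simp only [F']
    nlinarith [exp_pos (-c * s ^ a)]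
  have hF'_nonneg : ∀ s ∈ Ioi z, 0 ≤ F' s := fun s hs =>
    le_trans (by have := hz.trans hs; positivity) (hlower s hs)
  have htendsto := (tendsto_rpow_mul_exp_neg_mul_rpow (m := m) ha hc).neg
  rw [neg_zero] at htendsto
  calc ∫ s in Ioi z, s ^ (m + a - 1) * exp (-c * s ^ a)
      ≤ ∫ s in Ioi z, κ⁻¹ * F' s := by
        refine integral_mono_of_nonneg
          (ae_restrict_of_forall_mem measurableSet_Ioi fun s hs => ?_)
          ((integrableOn_Ioi_deriv_of_nonneg' hderiv hF'_nonneg htendsto).const_mul _)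
          (ae_restrict_of_forall_mem measurableSet_Ioi fun s hs => ?_)
        · have := hz.trans hs
          positivity
        · rw [le_inv_mul_iff₀ hκ]
          exact hlower s hs
    _ = κ⁻¹ * (z ^ m * exp (-c * z ^ a)) := by
        rw [integral_const_mul, integral_Ioi_of_hasDerivAt_of_nonneg' hderiv hF'_nonneg htendsto]
        ring

end RpowMulExp

lemma mul_sq_besselK0_rpow_le {α ξ s : ℝ} (hα : 0 < α) (hξ : 0 < ξ) (hs : 0 < s) :
    s * ((1 / α) * besselK0 ((s * ξ ^ (1 / α)) ^ α / α)) ^ 2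
      ≤ π / (2 * α * ξ) * (s ^ (1 - α) * exp (-(2 * ξ / α) * s ^ α)) := by
  have harg : (s * ξ ^ (1 / α)) ^ α = s ^ α * ξ := by
    rw [mul_rpow hs.le (rpow_nonneg hξ.le _), ← rpow_mul hξ.le, one_div_mul_cancel hα.ne',
      rpow_one]
  have hK := besselK0_sq_le (x := s ^ α * ξ / α) (by positivity)
  rw [harg, mul_pow, ← mul_assoc]
  calc s * (1 / α) ^ 2 * besselK0 (s ^ α * ξ / α) ^ 2
      ≤ s * (1 / α) ^ 2 * (π / (2 * (s ^ α * ξ / α)) * exp (-(2 * (s ^ α * ξ / α)))) := by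
        gcongr
    _ = π / (2 * α * ξ) * (s ^ (1 - α) * exp (-(2 * ξ / α) * s ^ α)) := by
        rw [rpow_sub hs, rpow_one]
        field_simp

/-- For `α ∈ (0,1/2)` and `u₁(z) = (1/α) K₀(z^α/α)`, for all `ξ > 0` and `z ≥ ξ^(-1/α)` one has
`∫_z^∞ s u₁(s ξ^(1/α))² ds ≤ C z^(2−2α) ξ^(−2) exp (−2 z^α ξ / α)`,
with a constant `C` depending only on `α`. -/
theorem stmt6 (α : ℝ) (hα : α ∈ Set.Ioo (0 : ℝ) (1 / 2))
    (u₁ : ℝ → ℝ) (hu₁ : u₁ = fun z => (1 / α) * besselK0 (z ^ α / α)) :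
    ∃ C > (0 : ℝ), ∀ ξ > (0 : ℝ), ∀ z : ℝ, ξ ^ (-(1 : ℝ) / α) ≤ z →
      ∫ s in Set.Ioi z, s * (u₁ (s * ξ ^ ((1 : ℝ) / α))) ^ 2
        ≤ C * z ^ (2 - 2 * α) * ξ ^ (-(2 : ℝ)) * Real.exp (-2 * z ^ α * ξ / α) := by
  obtain ⟨hα0, hα1⟩ := hα
  subst hu₁
  refine ⟨π / (4 * α ^ 2), by positivity, fun ξ hξ z hz => ?_⟩
  have hz0 : 0 < z := (rpow_pos_of_pos hξ _).trans_le hz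
  have hdecay : z ^ (-α) ≤ ξ := by
    calc z ^ (-α) ≤ (ξ ^ (-1 / α)) ^ (-α) :=
          rpow_le_rpow_of_nonpos (rpow_pos_of_pos hξ _) hz (by linarith)
      _ = ξ := by rw [← rpow_mul hξ.le, show -1 / α * -α = 1 by field_simp, rpow_one]
  have hslack : (2 - 2 * α) * z ^ (-α) ≤ 2 * ξ / α * α - 2 * α * ξ := by
    rw [div_mul_cancel₀ _ hα0.ne']
    nlinarith
  have htail :=
    integral_Ioi_rpow_mul_exp_neg_mul_rpow_le hα0 (by linarith) hz0 (by positivity) hslack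
  rw [show 2 - 2 * α + α - 1 = 1 - α by ring] at htail
  calc ∫ s in Ioi z, s * ((fun z => 1 / α * besselK0 (z ^ α / α)) (s * ξ ^ (1 / α))) ^ 2
      ≤ ∫ s in Ioi z, π / (2 * α * ξ) * (s ^ (1 - α) * exp (-(2 * ξ / α) * s ^ α)) := by
        refine integral_mono_of_nonneg
          (ae_restrict_of_forall_mem measurableSet_Ioi fun s hs => ?_)
          (((integrableOn_rpow_mul_exp_neg_mul_rpow (by linarith) hα0 (by positivity)).mono_set
            (Ioi_subset_Ioi hz0.le)).const_mul _)
          (ae_restrict_of_forall_mem measurableSet_Ioi fun s hs =>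
            mul_sq_besselK0_rpow_le hα0 hξ (hz0.trans hs))
        have := hz0.trans hs
        positivity
    _ = π / (2 * α * ξ) * ∫ s in Ioi z, s ^ (1 - α) * exp (-(2 * ξ / α) * s ^ α) :=
        integral_const_mul _ _
    _ ≤ π / (2 * α * ξ) * ((2 * α * ξ)⁻¹ * (z ^ (2 - 2 * α) * exp (-(2 * ξ / α) * z ^ α))) := by
        gcongr
    _ = π / (4 * α ^ 2) * z ^ (2 - 2 * α) * ξ ^ (-(2 : ℝ)) * exp (-2 * z ^ α * ξ / α) := by
        rw [rpow_neg hξ.le, rpow_two]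
        field_simp
        ring_nf
end

section
/- Let α ∈ (0,1/2) and u₀(z) = I_0(z^α/α). Then for every ξ > 0 and z ≥ ξ^{-1/α}, one has ∫_0^z s u₀(s ξ^{1/α})² ds ≤ C z^{2−2α} ξ^{−2} e^{2 z^α ξ/α}, for a constant C depending only on α. -/
open MeasureTheory

/-- The modified Bessel function of the first kind of order `0`,
via the integral representation `I₀(x) = (1/π) ∫_0^π exp (x cos t) dt`. -/
noncomputable def besselI0 (x : ℝ) : ℝ :=
  (1 / Real.pi) * ∫ t in (0 : ℝ)..Real.pi, Real.exp (x * Real.cos t)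

/-!
Jordan's inequality `cos θ ≤ 1 - 2θ²/π²` on `[0, π]` dominates the integrand of `I₀(t)` by a
half-Gaussian, which gives `I₀(t)² ≤ π e^{2t} / (8t)` for every `t > 0`. With `t = s^α ξ / α`
this yields `s u₀(s ξ^{1/α})² ≤ (π α / 8ξ) z^{2-2α} s^{α-1} e^{2ξ s^α / α}` for `0 < s ≤ z`,
and `s^{α-1} e^{c s^α}` is the exact derivative of `e^{c s^α} / (c α)`; integrating gives the
bound with `C = π α / 16`.
-/

open Real Set intervalIntegral

lemma besselI0_nonneg (x : ℝ) : 0 ≤ besselI0 x :=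
  mul_nonneg (by positivity) (integral_nonneg pi_pos.le fun _ _ => (exp_pos _).le)

lemma besselI0_sq_le {t : ℝ} (ht : 0 < t) : besselI0 t ^ 2 ≤ π / (8 * t) * exp (2 * t) := by
  set b := 2 * t / π ^ 2
  have hb : 0 < b := by positivity
  have hgauss : IntegrableOn (fun θ => exp t * exp (-b * θ ^ 2)) (Ioi 0) :=
    ((integrable_exp_neg_mul_sq hb).const_mul _).integrableOn
  have hint : ∫ θ in (0)..π, exp (t * cos θ) ≤ exp t * (√(π / b) / 2) :=
    calc ∫ θ in (0)..π, exp (t * cos θ)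
        ≤ ∫ θ in Ioc 0 π, exp t * exp (-b * θ ^ 2) := by
          rw [integral_of_le pi_pos.le]
          refine setIntegral_mono_on ?_ (hgauss.mono_set Ioc_subset_Ioi_self) measurableSet_Ioc
            fun θ hθ => ?_
          · exact (continuous_exp.comp (continuous_const.mul continuous_cos)).integrableOn_Ioc
          rw [← exp_add, exp_le_exp]
          have hjordan := cos_le_one_sub_mul_cos_sq (abs_le.2 ⟨by linarith [hθ.1, pi_pos], hθ.2⟩)
          have : t * cos θ ≤ t * (1 - 2 / π ^ 2 * θ ^ 2) := by gcongr
          linarith [show b * θ ^ 2 = t * (2 / π ^ 2 * θ ^ 2) by ring]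
      _ ≤ ∫ θ in Ioi 0, exp t * exp (-b * θ ^ 2) :=
          setIntegral_mono_set hgauss (.of_forall fun _ => by positivity)
            Ioc_subset_Ioi_self.eventuallyLE
      _ = exp t * (√(π / b) / 2) := by rw [MeasureTheory.integral_const_mul, integral_gaussian_Ioi]
  calc besselI0 t ^ 2 ≤ (1 / π * (exp t * (√(π / b) / 2))) ^ 2 :=
        pow_le_pow_left₀ (besselI0_nonneg t) (mul_le_mul_of_nonneg_left hint (by positivity)) 2
    _ = π / (8 * t) * exp (2 * t) := by
        rw [mul_pow, mul_pow, div_pow, div_pow, sq_sqrt (by positivity), ← exp_nat_mul]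
        simp only [b]
        field_simp
        push_cast
        ring_nf

lemma hasDerivAt_exp_mul_rpow_div {α c x : ℝ} (hα : α ≠ 0) (hc : c ≠ 0) (hx : x ≠ 0) :
    HasDerivAt (fun s => exp (c * s ^ α) / (c * α)) (x ^ (α - 1) * exp (c * x ^ α)) x :=
  ((((hasDerivAt_rpow_const (p := α) (Or.inl hx)).const_mul c).exp).div_const (c * α)).congr_deriv
    (by field_simp)

lemma continuous_exp_mul_rpow_div {α : ℝ} (hα : 0 < α) (c : ℝ) :
    Continuous fun s => exp (c * s ^ α) / (c * α) := by
  have : Continuous fun s : ℝ => s ^ α := continuous_id.rpow_const fun _ => Or.inr hα.le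
  fun_prop

section

variable {α c z : ℝ}

lemma integrableOn_rpow_sub_one_mul_exp_mul_rpow (hα : 0 < α) (hc : c ≠ 0) :
    IntegrableOn (fun s => s ^ (α - 1) * exp (c * s ^ α)) (Ioc 0 z) :=
  integrableOn_deriv_of_nonneg (continuous_exp_mul_rpow_div hα c).continuousOn
    (fun _ hx => hasDerivAt_exp_mul_rpow_div hα.ne' hc hx.1.ne')
    fun x hx => by have := hx.1; positivity

lemma integral_Ioc_rpow_sub_one_mul_exp_mul_rpow (hα : 0 < α) (hc : c ≠ 0) (hz : 0 ≤ z) :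
    ∫ s in Ioc 0 z, s ^ (α - 1) * exp (c * s ^ α) = (exp (c * z ^ α) - 1) / (c * α) := by
  rw [← integral_of_le hz, integral_eq_sub_of_hasDerivAt_of_le hz
    (continuous_exp_mul_rpow_div hα c).continuousOn
    (fun _ hx => hasDerivAt_exp_mul_rpow_div hα.ne' hc hx.1.ne')
    ((intervalIntegrable_iff_integrableOn_Ioc_of_le hz).2
      (integrableOn_rpow_sub_one_mul_exp_mul_rpow hα hc)),
    zero_rpow hα.ne', mul_zero, exp_zero, sub_div]

lemma mul_besselI0_sq_le {ξ s : ℝ} (hα : 0 < α) (hα1 : α ≤ 1) (hξ : 0 < ξ) (hs : 0 < s)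
    (hsz : s ≤ z) :
    s * besselI0 ((s * ξ ^ (1 / α)) ^ α / α) ^ 2
      ≤ π * α * z ^ (2 - 2 * α) / (8 * ξ) * (s ^ (α - 1) * exp (2 * ξ / α * s ^ α)) := by
  have hscale : (s * ξ ^ (1 / α)) ^ α = s ^ α * ξ := by
    rw [mul_rpow hs.le (rpow_nonneg hξ.le _), ← rpow_mul hξ.le, one_div_mul_cancel hα.ne',
      rpow_one]
  have hsplit : s ^ (2 - 2 * α) * s ^ (α - 1) * s ^ α = s := by
    rw [← rpow_add hs, ← rpow_add hs, show 2 - 2 * α + (α - 1) + α = 1 by ring, rpow_one]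
  have hsα : 0 < s ^ α := rpow_pos_of_pos hs α
  rw [hscale]
  calc s * besselI0 (s ^ α * ξ / α) ^ 2
      ≤ s * (π / (8 * (s ^ α * ξ / α)) * exp (2 * (s ^ α * ξ / α))) := by
        gcongr
        exact besselI0_sq_le (by positivity)
    _ = π * α * s ^ (2 - 2 * α) / (8 * ξ) * (s ^ (α - 1) * exp (2 * ξ / α * s ^ α)) := by
        nth_rewrite 1 [← hsplit]
        field_simp
    _ ≤ π * α * z ^ (2 - 2 * α) / (8 * ξ) * (s ^ (α - 1) * exp (2 * ξ / α * s ^ α)) := by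
        gcongr
        linarith

end

/-- For `α ∈ (0,1/2)` and `u₀(z) = I₀(z^α/α)`, for all `ξ > 0` and `z ≥ ξ^(-1/α)` one has
`∫_0^z s u₀(s ξ^(1/α))² ds ≤ C z^(2−2α) ξ^(−2) exp (2 z^α ξ / α)`,
with a constant `C` depending only on `α`. -/
theorem stmt7 (α : ℝ) (hα : α ∈ Set.Ioo (0 : ℝ) (1 / 2))
    (u₀ : ℝ → ℝ) (hu₀ : u₀ = fun z => besselI0 (z ^ α / α)) :
    ∃ C > (0 : ℝ), ∀ ξ > (0 : ℝ), ∀ z : ℝ, ξ ^ (-(1 : ℝ) / α) ≤ z →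
      ∫ s in Set.Ioo (0 : ℝ) z, s * (u₀ (s * ξ ^ ((1 : ℝ) / α))) ^ 2
        ≤ C * z ^ (2 - 2 * α) * ξ ^ (-(2 : ℝ)) * Real.exp (2 * z ^ α * ξ / α) := by
  obtain ⟨hα0, hα2⟩ := hα
  refine ⟨π * α / 16, by positivity, fun ξ hξ z hz => ?_⟩
  have hz0 : 0 < z := (rpow_pos_of_pos hξ _).trans_le hz
  have hc : 2 * ξ / α ≠ 0 := by positivity
  subst hu₀
  calc ∫ s in Ioo 0 z, s * besselI0 ((s * ξ ^ (1 / α)) ^ α / α) ^ 2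
      ≤ ∫ s in Ioo 0 z, π * α * z ^ (2 - 2 * α) / (8 * ξ)
          * (s ^ (α - 1) * exp (2 * ξ / α * s ^ α)) :=
        integral_mono_of_nonneg (ae_restrict_of_forall_mem measurableSet_Ioo fun s hs => by
            have := hs.1; positivity)
          (((integrableOn_rpow_sub_one_mul_exp_mul_rpow hα0 hc).mono_set
            Ioo_subset_Ioc_self).const_mul _)
          (ae_restrict_of_forall_mem measurableSet_Ioo fun s hs =>
            mul_besselI0_sq_le hα0 (by linarith) hξ hs.1 hs.2.le)
    _ = π * α * z ^ (2 - 2 * α) / (8 * ξ) * ((exp (2 * z ^ α * ξ / α) - 1) / (2 * ξ)) := by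
        rw [MeasureTheory.integral_const_mul, ← integral_Ioc_eq_integral_Ioo,
          integral_Ioc_rpow_sub_one_mul_exp_mul_rpow hα0 hc hz0.le]
        field_simp
    _ ≤ π * α / 16 * z ^ (2 - 2 * α) * ξ ^ (-(2 : ℝ)) * exp (2 * z ^ α * ξ / α) := by
        rw [rpow_neg hξ.le, rpow_two]
        have hzpow : 0 < z ^ (2 - 2 * α) := rpow_pos_of_pos hz0 _
        field_simp
        nlinarith
end

section
/- Consider the radial operator A on Ω = S² × (0,∞) given by Aφ = −(1 + 2M/r) r^{−2} [ ∂_r( r²(1 + 2M/r) ∂_r φ ) + Δ_{S²} φ ], M > 0, symmetric on H = L²(Ω, r²(1+2M/r)^{−1} dr dσ). For integers l ≥ 1 and |m| ≤ l, the function φ(r,θ) = Q_l(1 + r/M) Y_l^m(θ), where Q_l is the Legendre function of the second kind and Y_l^m the spherical harmonic, satisfies: φ ∈ H, Aφ = 0 in the distribution sense on Ω, and the energy b(φ,φ) = ∫_Ω [ |∂_r φ|² r²(1+2M/r) + |∇_θ φ|² r² ] dr dσ is infinite. Hence A is not essentially self-adjoint on C_0^∞(Ω). -/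
open MeasureTheory Set ContDiff

theorem auxU {M : ℝ} (hM : 0 < M) {Q : ℝ → ℝ} (hQsm : ContDiffOn ℝ (⊤ : ℕ∞) Q (Set.Ioi 1))
    {r : ℝ} (hr : 0 < r) :
    HasDerivAt (fun s => Q (1 + s / M)) (deriv Q (1 + r / M) * M⁻¹) r := by
  have hx : (1 : ℝ) < 1 + r / M := by
    have : 0 < r / M := div_pos hr hM
    linarith
  have h1 : HasDerivAt (fun s : ℝ => 1 + s / M) M⁻¹ r := by
    simpa [one_div] using ((hasDerivAt_id r).div_const M).const_add 1
  have hQd : DifferentiableAt ℝ Q (1 + r / M) :=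
    (hQsm.contDiffAt (isOpen_Ioi.mem_nhds hx)).differentiableAt (by simp)
  exact hQd.hasDerivAt.comp r h1

theorem auxU' {M : ℝ} (hM : 0 < M) {Q : ℝ → ℝ} (hQsm : ContDiffOn ℝ (⊤ : ℕ∞) Q (Set.Ioi 1))
    {r : ℝ} (hr : 0 < r) :
    HasDerivAt (fun s => deriv Q (1 + s / M)) (deriv (deriv Q) (1 + r / M) * M⁻¹) r := by
  have hx : (1 : ℝ) < 1 + r / M := by
    have : 0 < r / M := div_pos hr hM; linarith
  have h1 : HasDerivAt (fun s : ℝ => 1 + s / M) M⁻¹ r := by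
    simpa [one_div] using ((hasDerivAt_id r).div_const M).const_add 1
  have hQ' : ContDiffOn ℝ (⊤ : ℕ∞) (deriv Q) (Set.Ioi 1) :=
    hQsm.deriv_of_isOpen isOpen_Ioi (by simp)
  have hQd : DifferentiableAt ℝ (deriv Q) (1 + r / M) :=
    (hQ'.contDiffAt (isOpen_Ioi.mem_nhds hx)).differentiableAt (by simp)
  exact hQd.hasDerivAt.comp r h1

theorem auxG {l : ℕ} {M : ℝ} (hM : 0 < M) {Q : ℝ → ℝ} (hQsm : ContDiffOn ℝ (⊤ : ℕ∞) Q (Set.Ioi 1))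
    (hODE : ∀ x ∈ Set.Ioi (1 : ℝ),
      (1 - x ^ 2) * deriv (deriv Q) x - 2 * x * deriv Q x + (l * (l + 1) : ℝ) * Q x = 0)
    {r : ℝ} (hr : 0 < r) :
    HasDerivAt (fun s => (s ^ 2 + 2 * M * s) * (deriv Q (1 + s / M) * M⁻¹))
      ((l * (l + 1) : ℝ) * Q (1 + r / M)) r := by
  have hx : (1 : ℝ) < 1 + r / M := by
    have : 0 < r / M := div_pos hr hM; linarith
  have hq : HasDerivAt (fun s : ℝ => s ^ 2 + 2 * M * s) (2 * r + 2 * M) r := by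
    have h1 : HasDerivAt (fun s : ℝ => s ^ 2) (2 * r) r := by
      simpa using (hasDerivAt_pow 2 r)
    have h2 : HasDerivAt (fun s : ℝ => 2 * M * s) (2 * M) r := by
      simpa using (hasDerivAt_id r).const_mul (2 * M)
    exact h1.add h2
  have hdu : HasDerivAt (fun s => deriv Q (1 + s / M) * M⁻¹)
      (deriv (deriv Q) (1 + r / M) * M⁻¹ * M⁻¹) r :=
    (auxU' hM hQsm hr).mul_const M⁻¹
  have := hq.mul hdu
  refine this.congr_deriv ?_
  have hODE' := hODE (1 + r / M) hx
  have hMne : M ≠ 0 := hM.ne'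
  have hMM := mul_inv_cancel₀ hMne
  linear_combination -hODE' + ((2 : ℝ) * deriv Q (1 + r / M)
    + 2 * r * M⁻¹ * deriv (deriv Q) (1 + r / M)) * hMM

theorem auxLog {r : ℝ} (h0 : 0 < r) (h1 : r < 1) :
    1 + |Real.log r| ≤ 4 * r ^ (-(4⁻¹ : ℝ)) := by
  have hlr : Real.log r ≤ 0 := Real.log_nonpos h0.le h1.le
  have habs : |Real.log r| = Real.log r⁻¹ := by
    rw [Real.log_inv, abs_of_nonpos hlr]
  have hrpos : (0 : ℝ) < r⁻¹ ^ ((4 : ℝ)⁻¹) := Real.rpow_pos_of_pos (inv_pos.mpr h0) _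
  have hlog4 : Real.log r⁻¹ = 4 * Real.log (r⁻¹ ^ ((4 : ℝ)⁻¹)) := by
    rw [Real.log_rpow (inv_pos.mpr h0)]; ring
  have hle : Real.log (r⁻¹ ^ ((4 : ℝ)⁻¹)) ≤ r⁻¹ ^ ((4 : ℝ)⁻¹) - 1 :=
    Real.log_le_sub_one_of_pos hrpos
  have heq : r⁻¹ ^ ((4 : ℝ)⁻¹) = r ^ (-(4⁻¹ : ℝ)) := by
    rw [Real.rpow_neg h0.le, ← Real.inv_rpow h0.le]
  calc 1 + |Real.log r| = 1 + 4 * Real.log (r⁻¹ ^ ((4 : ℝ)⁻¹)) := by rw [habs, hlog4]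
    _ ≤ 1 + 4 * (r⁻¹ ^ ((4 : ℝ)⁻¹) - 1) := by linarith
    _ ≤ 4 * (r⁻¹ ^ ((4 : ℝ)⁻¹)) := by linarith
    _ = 4 * r ^ (-(4⁻¹ : ℝ)) := by rw [heq]

set_option maxHeartbeats 2000000 in
theorem partIII (l : ℕ) (hl : 1 ≤ l) (M : ℝ) (hM : 0 < M) (Q : ℝ → ℝ)
    (hQsm : ContDiffOn ℝ (⊤ : ℕ∞) Q (Set.Ioi 1))
    (hODE : ∀ x ∈ Set.Ioi (1 : ℝ),
      (1 - x ^ 2) * deriv (deriv Q) x - 2 * x * deriv Q x + (l * (l + 1) : ℝ) * Q x = 0)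
    (hQ0 : ∃ C > (0 : ℝ), ∀ r ∈ Set.Ioo (0 : ℝ) 1,
      |Q (1 + r / M)| ≤ C * (1 + |Real.log r|) ∧ |deriv Q (1 + r / M)| ≤ C / r)
    (hQinf : ∃ C > (0 : ℝ), ∀ r : ℝ, 1 ≤ r → |Q (1 + r / M)| ≤ C * r ^ (-(l + 1 : ℝ)))
    (hQne : ∃ x ∈ Set.Ioi (1 : ℝ), Q x ≠ 0) :
    ¬ IntegrableOn (fun r =>
        (deriv (fun s => Q (1 + s / M)) r) ^ 2 * r ^ 2 * (1 + 2 * M / r)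
          + (l * (l + 1) : ℝ) * Q (1 + r / M) ^ 2 * r ^ 2) (Set.Ioi 0) := by
  obtain ⟨C, hC, hC0⟩ := hQ0
  obtain ⟨C', hC', hCinf⟩ := hQinf
  set lam : ℝ := (l * (l + 1) : ℝ) with hlamdef
  have hlam : (2 : ℝ) ≤ lam := by
    have : (1 : ℝ) ≤ (l : ℝ) := by exact_mod_cast hl
    rw [hlamdef]; nlinarith
  have hlamp : (0 : ℝ) < lam := by linarith
  set u : ℝ → ℝ := fun r => Q (1 + r / M) with hu
  set du : ℝ → ℝ := fun r => deriv Q (1 + r / M) * M⁻¹ with hdu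
  set G : ℝ → ℝ := fun r => (r ^ 2 + 2 * M * r) * du r with hG
  set Φ : ℝ → ℝ := fun r => G r * u r with hΦ
  -- continuity facts
  have hcontu : ContinuousOn u (Set.Ioi 0) := by
    apply hQsm.continuousOn.comp
    · exact (continuous_const.add (continuous_id.div_const M)).continuousOn
    · intro r hr
      rw [Set.mem_Ioi] at hr ⊢
      have : 0 < r / M := div_pos hr hM
      linarith
  have hcontdu : ContinuousOn du (Set.Ioi 0) := by
    have hQ' : ContDiffOn ℝ (⊤ : ℕ∞) (deriv Q) (Set.Ioi 1) :=
      hQsm.deriv_of_isOpen isOpen_Ioi (by simp)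
    apply ContinuousOn.mul _ continuous_const.continuousOn
    apply hQ'.continuousOn.comp
    · exact (continuous_const.add (continuous_id.div_const M)).continuousOn
    · intro r hr
      rw [Set.mem_Ioi] at hr ⊢
      have : 0 < r / M := div_pos hr hM
      linarith
  have hcontG : ContinuousOn G (Set.Ioi 0) :=
    ((continuous_pow 2).add (continuous_const.mul continuous_id)).continuousOn.mul hcontdu
  -- positivity of q
  have hqpos : ∀ r : ℝ, 0 < r → 0 < r ^ 2 + 2 * M * r := by
    intro r hr; nlinarith
  -- bound on u near 0
  have hub : ∀ r ∈ Set.Ioo (0 : ℝ) 1, |u r| ≤ 4 * C * r ^ (-(4⁻¹ : ℝ)) := by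
    intro r hr
    calc |u r| ≤ C * (1 + |Real.log r|) := (hC0 r hr).1
      _ ≤ C * (4 * r ^ (-(4⁻¹ : ℝ))) :=
          mul_le_mul_of_nonneg_left (auxLog hr.1 hr.2) hC.le
      _ = 4 * C * r ^ (-(4⁻¹ : ℝ)) := by ring
  -- bound on u at infinity
  have hub2 : ∀ r : ℝ, 1 ≤ r → |u r| ≤ C' * r ^ (-(2 : ℝ)) := by
    intro r hr
    have hr0 : (0 : ℝ) < r := by linarith
    calc |u r| ≤ C' * r ^ (-(l + 1 : ℝ)) := hCinf r hr
      _ ≤ C' * r ^ (-(2 : ℝ)) := by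
          apply mul_le_mul_of_nonneg_left _ hC'.le
          apply Real.rpow_le_rpow_of_exponent_le hr
          have : (1 : ℝ) ≤ (l : ℝ) := by exact_mod_cast hl
          linarith
  -- integrability of u near 0 and at infinity
  have huint0 : IntegrableOn u (Set.Ioo 0 1) := by
    have hig : IntegrableOn (fun r : ℝ => 4 * C * r ^ (-(4⁻¹ : ℝ))) (Set.Ioo 0 1) := by
      have : IntervalIntegrable (fun r : ℝ => r ^ (-(4⁻¹ : ℝ))) volume 0 1 :=
        intervalIntegral.intervalIntegrable_rpow' (by norm_num)
      rw [intervalIntegrable_iff_integrableOn_Ioo_of_le zero_le_one] at this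
      exact this.const_mul _
    apply hig.mono' ((hcontu.mono Set.Ioo_subset_Ioi_self).aestronglyMeasurable measurableSet_Ioo)
    filter_upwards [ae_restrict_mem measurableSet_Ioo] with r hr
    exact hub r hr
  have huintInf : IntegrableOn u (Set.Ioi 1) := by
    have hig : IntegrableOn (fun r : ℝ => C' * r ^ (-(2 : ℝ))) (Set.Ioi 1) :=
      (integrableOn_Ioi_rpow_of_lt (by norm_num) zero_lt_one).const_mul _
    apply hig.mono' ((hcontu.mono (Set.Ioi_subset_Ioi zero_le_one)).aestronglyMeasurable
      measurableSet_Ioi)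
    filter_upwards [ae_restrict_mem measurableSet_Ioi] with r hr
    exact hub2 r (le_of_lt hr)
  have huintIoc : IntegrableOn u (Set.Ioc 0 1) :=
    Iff.mpr integrableOn_Ioc_iff_integrableOn_Ioo huint0
  -- FTC for G
  have hGftc : ∀ a b : ℝ, 0 < a → a ≤ b → G b - G a = lam * ∫ t in Set.Ioc a b, u t := by
    intro a b ha hab
    have hsub : Set.uIcc a b ⊆ Set.Ioi 0 := by
      rw [Set.uIcc_of_le hab]
      intro t ht
      exact lt_of_lt_of_le ha ht.1
    have hderiv : ∀ t ∈ Set.uIcc a b, HasDerivAt G (lam * u t) t := fun t ht =>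
      auxG hM hQsm hODE (hsub ht)
    have hcont : IntervalIntegrable (fun t => lam * u t) volume a b :=
      ((continuous_const.continuousOn.mul hcontu).mono hsub).intervalIntegrable
    have := intervalIntegral.integral_eq_sub_of_hasDerivAt hderiv hcont
    rw [← this, intervalIntegral.integral_of_le hab, MeasureTheory.integral_const_mul]
  -- quantitative estimate for the tail integral of |u| near 0
  have htail : ∀ ε : ℝ, 0 < ε → ε ≤ 1 → ∫ t in Set.Ioc 0 ε, |u t| ≤ 6 * C * ε ^ ((3 : ℝ)/4) := by
    intro ε hε hε1
    have hsub : Set.Ioo (0 : ℝ) ε ⊆ Set.Ioo 0 1 := Set.Ioo_subset_Ioo le_rfl hε1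
    have habs_int : IntegrableOn (fun t => |u t|) (Set.Ioo 0 ε) :=
      (huint0.mono_set hsub).abs
    have hrint : IntervalIntegrable (fun t : ℝ => t ^ (-(4⁻¹ : ℝ))) volume 0 ε :=
      intervalIntegral.intervalIntegrable_rpow' (by norm_num)
    have hrint' : IntegrableOn (fun t : ℝ => 4 * C * t ^ (-(4⁻¹ : ℝ))) (Set.Ioo 0 ε) := by
      rw [intervalIntegrable_iff_integrableOn_Ioo_of_le hε.le] at hrint
      exact hrint.const_mul _
    have hmono : ∫ t in Set.Ioo 0 ε, |u t| ≤ ∫ t in Set.Ioo 0 ε, 4 * C * t ^ (-(4⁻¹ : ℝ)) := by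
      apply setIntegral_mono_on habs_int hrint' measurableSet_Ioo
      intro t ht
      exact hub t (hsub ht)
    have hcomp : ∫ t in Set.Ioo 0 ε, (4 : ℝ) * C * t ^ (-(4⁻¹ : ℝ))
        = 4 * C * (ε ^ ((3 : ℝ)/4) / ((3 : ℝ)/4)) := by
      rw [← MeasureTheory.integral_Ioc_eq_integral_Ioo, ← intervalIntegral.integral_of_le hε.le,
        intervalIntegral.integral_const_mul, integral_rpow (Or.inl (by norm_num))]
      rw [Real.zero_rpow (by norm_num : (-(4⁻¹ : ℝ) + 1) ≠ 0)]
      norm_num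
    rw [MeasureTheory.integral_Ioc_eq_integral_Ioo]
    have hrp : (0 : ℝ) ≤ ε ^ ((3 : ℝ)/4) := Real.rpow_nonneg hε.le _
    calc ∫ t in Set.Ioo 0 ε, |u t| ≤ 4 * C * (ε ^ ((3 : ℝ)/4) / ((3 : ℝ)/4)) := by
          rw [← hcomp]; exact hmono
      _ ≤ 6 * C * ε ^ ((3 : ℝ)/4) := by nlinarith
  -- the limit value of G at 0⁺
  set c₀ : ℝ := G 1 - lam * ∫ t in Set.Ioc 0 1, u t with hc₀
  have hGeps : ∀ ε : ℝ, 0 < ε → ε ≤ 1 → |G ε - c₀| ≤ lam * (6 * C * ε ^ ((3 : ℝ)/4)) := by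
    intro ε hε hε1
    have hsplit : ∫ t in Set.Ioc 0 1, u t
        = (∫ t in Set.Ioc 0 ε, u t) + ∫ t in Set.Ioc ε 1, u t := by
      rw [← setIntegral_union (Set.Ioc_disjoint_Ioc_of_le le_rfl) measurableSet_Ioc
        (huintIoc.mono_set (Set.Ioc_subset_Ioc le_rfl hε1))
        (huintIoc.mono_set (Set.Ioc_subset_Ioc hε.le le_rfl)),
        Set.Ioc_union_Ioc_eq_Ioc hε.le hε1]
    have hftc := hGftc ε 1 hε hε1
    have hkey : G ε - c₀ = lam * ∫ t in Set.Ioc 0 ε, u t := by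
      rw [hc₀, hsplit]; linarith [hftc]
    rw [hkey, abs_mul, abs_of_pos hlamp]
    apply mul_le_mul_of_nonneg_left _ hlamp.le
    calc |∫ t in Set.Ioc 0 ε, u t| ≤ ∫ t in Set.Ioc 0 ε, |u t| := by
          simpa [Real.norm_eq_abs] using
            norm_integral_le_integral_norm (μ := volume.restrict (Set.Ioc 0 ε)) u
      _ ≤ 6 * C * ε ^ ((3 : ℝ)/4) := htail ε hε hε1
  -- the first term of the energy integrand equals G²/q on Ioi 0
  have hterm : ∀ r : ℝ, 0 < r →
      (deriv (fun s => Q (1 + s / M)) r) ^ 2 * r ^ 2 * (1 + 2 * M / r)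
        = (r ^ 2 + 2 * M * r) * du r ^ 2 := by
    intro r hr
    rw [(auxU hM hQsm hr).deriv]
    have hr0 : r ≠ 0 := hr.ne'
    simp only [hdu]
    have hrr := mul_inv_cancel₀ hr0
    linear_combination (2 * M * (deriv Q (1 + r / M) * M⁻¹) ^ 2 * r) * hrr
  by_cases hc : c₀ = 0
  · -- c₀ = 0 : derive an outright contradiction with hQne
    exfalso
    have hGeps0 : ∀ ε : ℝ, 0 < ε → ε ≤ 1 → |G ε| ≤ lam * (6 * C * ε ^ ((3 : ℝ)/4)) := by
      intro ε h1 h2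
      simpa [hc] using hGeps ε h1 h2
    -- the derivative of Φ
    have hΦd : ∀ r : ℝ, 0 < r →
        HasDerivAt Φ (lam * u r * u r + G r * du r) r := by
      intro r hr
      exact (auxG hM hQsm hODE hr).mul (auxU hM hQsm hr)
    set E : ℝ → ℝ := fun r => lam * u r * u r + G r * du r with hE
    have hGmul : ∀ r : ℝ, G r * du r = (r ^ 2 + 2 * M * r) * (du r * du r) := by
      intro r; rw [hG]; ring
    have hEnn : ∀ r : ℝ, 0 < r → 0 ≤ E r := by
      intro r hr
      have hq := hqpos r hr
      have h1 := mul_nonneg hlamp.le (mul_self_nonneg (u r))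
      have h2 := mul_nonneg hq.le (mul_self_nonneg (du r))
      have h3 := hGmul r
      have h4 : lam * u r * u r = lam * (u r * u r) := by ring
      rw [hE]
      dsimp only
      rw [h3, h4]
      linarith
    have hcontE : ContinuousOn E (Set.Ioi 0) :=
      ((continuous_const.continuousOn.mul hcontu).mul hcontu).add (hcontG.mul hcontdu)
    -- Φ is monotone on (0,∞)
    have hmonoΦ : ∀ a b : ℝ, 0 < a → a ≤ b → Φ a ≤ Φ b := by
      intro a b ha hab
      have hsub : Set.uIcc a b ⊆ Set.Ioi 0 := by
        rw [Set.uIcc_of_le hab]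
        intro t ht
        exact lt_of_lt_of_le ha ht.1
      have hderiv : ∀ t ∈ Set.uIcc a b, HasDerivAt Φ (E t) t := fun t ht =>
        hΦd t (hsub ht)
      have hint : IntervalIntegrable E volume a b := (hcontE.mono hsub).intervalIntegrable
      have hftc := intervalIntegral.integral_eq_sub_of_hasDerivAt hderiv hint
      have hnn : 0 ≤ ∫ t in a..b, E t := by
        apply intervalIntegral.integral_nonneg hab
        intro t ht
        exact hEnn t (lt_of_lt_of_le ha ht.1)
      rw [hftc] at hnn
      linarith
    -- Φ tends to 0 at infinity
    have hGtop : Filter.Tendsto G Filter.atTop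
        (nhds (G 1 + lam * ∫ t in Set.Ioi 1, u t)) := by
      have h1 := MeasureTheory.intervalIntegral_tendsto_integral_Ioi 1 huintInf
        Filter.tendsto_id
      have h2 : Filter.Tendsto (fun R => G 1 + lam * ∫ t in (1:ℝ)..R, u t) Filter.atTop
          (nhds (G 1 + lam * ∫ t in Set.Ioi 1, u t)) :=
        Filter.Tendsto.add tendsto_const_nhds (h1.const_mul lam)
      apply h2.congr'
      filter_upwards [Filter.eventually_ge_atTop (1 : ℝ)] with R hR
      have h3 := hGftc 1 R zero_lt_one hR
      rw [intervalIntegral.integral_of_le hR]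
      linarith
    have hutop : Filter.Tendsto u Filter.atTop (nhds 0) := by
      apply squeeze_zero_norm' _
        (show Filter.Tendsto (fun r : ℝ => C' * r ^ (-(2:ℝ))) Filter.atTop (nhds 0) by
          have := tendsto_rpow_neg_atTop (by norm_num : (0:ℝ) < 2)
          simpa using this.const_mul C')
      filter_upwards [Filter.eventually_ge_atTop (1 : ℝ)] with r hr
      simpa [Real.norm_eq_abs] using hub2 r hr
    have hΦtop : Filter.Tendsto Φ Filter.atTop (nhds 0) := by
      have := hGtop.mul hutop
      simpa using this
    -- Φ tends to 0 at 0⁺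
    have hΦ0 : Filter.Tendsto Φ (nhdsWithin 0 (Set.Ioi 0)) (nhds 0) := by
      apply squeeze_zero_norm'
        (a := fun ε : ℝ => lam * (6 * C) * (4 * C) * ε ^ ((1 : ℝ)/2))
      · filter_upwards [Ioo_mem_nhdsGT_of_mem ⟨le_refl (0:ℝ), zero_lt_one⟩] with ε hε
        have h1 := hGeps0 ε hε.1 hε.2.le
        have h2 := hub ε hε
        have hεp := hε.1
        have hprod : |G ε| * |u ε| ≤ (lam * (6 * C * ε ^ ((3:ℝ)/4))) * (4 * C * ε ^ (-(4⁻¹:ℝ))) := by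
          apply mul_le_mul h1 h2 (abs_nonneg _)
          positivity
        have hrpow : ε ^ ((3:ℝ)/4) * ε ^ (-(4⁻¹:ℝ)) = ε ^ ((1:ℝ)/2) := by
          rw [← Real.rpow_add hεp]
          norm_num
        calc ‖Φ ε‖ = |G ε| * |u ε| := by
              rw [hΦ, Real.norm_eq_abs]; exact abs_mul _ _
          _ ≤ (lam * (6 * C * ε ^ ((3:ℝ)/4))) * (4 * C * ε ^ (-(4⁻¹:ℝ))) := hprod
          _ = lam * (6 * C) * (4 * C) * (ε ^ ((3:ℝ)/4) * ε ^ (-(4⁻¹:ℝ))) := by ring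
          _ = lam * (6 * C) * (4 * C) * ε ^ ((1:ℝ)/2) := by rw [hrpow]
      · have h1 : Filter.Tendsto (fun ε : ℝ => ε ^ ((1 : ℝ)/2)) (nhds 0) (nhds 0) := by
          have := (Real.continuousAt_rpow_const 0 ((1 : ℝ)/2) (Or.inr (by norm_num))).tendsto
          simpa [Real.zero_rpow (by norm_num : ((1 : ℝ)/2) ≠ 0)] using this
        have h2 : Filter.Tendsto (fun ε : ℝ => ε ^ ((1 : ℝ)/2))
            (nhdsWithin 0 (Set.Ioi 0)) (nhds 0) := h1.mono_left nhdsWithin_le_nhds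
        have h3 : Filter.Tendsto (fun ε : ℝ => lam * (6 * C) * (4 * C) * ε ^ ((1 : ℝ)/2))
            (nhdsWithin 0 (Set.Ioi 0)) (nhds (lam * (6 * C) * (4 * C) * 0)) := h2.const_mul _
        simpa using h3
    -- Φ vanishes identically on (0,∞)
    have hΦle : ∀ r : ℝ, 0 < r → Φ r ≤ 0 := by
      intro r hr
      apply ge_of_tendsto hΦtop
      filter_upwards [Filter.eventually_ge_atTop r] with R hR
      exact hmonoΦ r R hr hR
    have hΦge : ∀ r : ℝ, 0 < r → 0 ≤ Φ r := by
      intro r hr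
      apply le_of_tendsto hΦ0
      filter_upwards [Ioo_mem_nhdsGT_of_mem ⟨le_refl (0:ℝ), hr⟩] with ε hε
      exact hmonoΦ ε r hε.1 hε.2.le
    have hΦeq : ∀ r : ℝ, 0 < r → Φ r = 0 := fun r hr =>
      le_antisymm (hΦle r hr) (hΦge r hr)
    -- hence E vanishes, hence u vanishes
    have hEzero : ∀ r : ℝ, 0 < r → E r = 0 := by
      intro r hr
      have hev : Φ =ᶠ[nhds r] (fun _ => (0:ℝ)) :=
        Filter.eventually_of_mem (isOpen_Ioi.mem_nhds hr) (fun s hs => hΦeq s hs)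
      have hd := (hΦd r hr).deriv
      rw [hev.deriv_eq] at hd
      simp at hd
      rw [hE]
      dsimp only
      exact hd.symm
    have huz : ∀ r : ℝ, 0 < r → u r = 0 := by
      intro r hr
      have hE1 := hEzero r hr
      rw [hE] at hE1
      dsimp only at hE1
      rw [hGmul r] at hE1
      have hq := hqpos r hr
      have h2 := mul_nonneg hq.le (mul_self_nonneg (du r))
      have h1 : u r * u r ≤ 0 := by nlinarith
      exact mul_self_eq_zero.mp (le_antisymm h1 (mul_self_nonneg _))
    obtain ⟨x, hx, hQx⟩ := hQne
    rw [Set.mem_Ioi] at hx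
    apply hQx
    have hr : 0 < M * (x - 1) := by nlinarith
    have hxx : 1 + M * (x - 1) / M = x := by field_simp; ring
    have := huz (M * (x - 1)) hr
    rw [hu] at this
    dsimp only at this
    rwa [hxx] at this
  · -- c₀ ≠ 0 : the energy diverges near r = 0
    intro hInt
    -- eventually |G ε| ≥ |c₀|/2
    have hbnd_tendsto : Filter.Tendsto (fun ε : ℝ => lam * (6 * C * ε ^ ((3 : ℝ)/4)))
        (nhdsWithin 0 (Set.Ioi 0)) (nhds 0) := by
      have h1 : Filter.Tendsto (fun ε : ℝ => ε ^ ((3 : ℝ)/4)) (nhds 0) (nhds 0) := by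
        have := (Real.continuousAt_rpow_const 0 ((3 : ℝ)/4) (Or.inr (by norm_num))).tendsto
        simpa [Real.zero_rpow (by norm_num : ((3 : ℝ)/4) ≠ 0)] using this
      have h2 : Filter.Tendsto (fun ε : ℝ => ε ^ ((3 : ℝ)/4))
          (nhdsWithin 0 (Set.Ioi 0)) (nhds 0) := h1.mono_left nhdsWithin_le_nhds
      have h3 : Filter.Tendsto (fun ε : ℝ => lam * (6 * C) * ε ^ ((3 : ℝ)/4))
          (nhdsWithin 0 (Set.Ioi 0)) (nhds (lam * (6 * C) * 0)) := h2.const_mul _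
      simpa [mul_assoc] using h3
    have hev : ∀ᶠ ε in nhdsWithin 0 (Set.Ioi 0), |c₀| / 2 ≤ |G ε| := by
      have h1 : ∀ᶠ ε in nhdsWithin 0 (Set.Ioi 0),
          lam * (6 * C * ε ^ ((3 : ℝ)/4)) < |c₀| / 2 :=
        hbnd_tendsto.eventually (gt_mem_nhds (by positivity))
      have h2 : Set.Ioo (0 : ℝ) 1 ∈ nhdsWithin 0 (Set.Ioi 0) :=
        Ioo_mem_nhdsGT_of_mem ⟨le_refl 0, zero_lt_one⟩
      filter_upwards [h1, h2] with ε hε1 hε2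
      have h3 := hGeps ε hε2.1 hε2.2.le
      have h4 := abs_sub_abs_le_abs_sub c₀ (G ε)
      have h5 : |c₀ - G ε| = |G ε - c₀| := abs_sub_comm _ _
      linarith
    obtain ⟨δ', hδ', hδsub⟩ := mem_nhdsGT_iff_exists_Ioo_subset.mp hev
    rw [Set.mem_Ioi] at hδ'
    set δ : ℝ := min δ' (min M 1) with hδdef
    have hδpos : 0 < δ := lt_min hδ' (lt_min hM zero_lt_one)
    have hδM : δ ≤ M := le_trans (min_le_right _ _) (min_le_left _ _)
    -- on Ioo 0 δ the integrand dominates c₀²/(12M) / r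
    set k : ℝ := c₀ ^ 2 / (12 * M) with hk
    have hkpos : 0 < k := by
      have : c₀ ^ 2 > 0 := by positivity
      positivity
    have hlower : ∀ r ∈ Set.Ioo (0 : ℝ) δ,
        k * r⁻¹ ≤ (deriv (fun s => Q (1 + s / M)) r) ^ 2 * r ^ 2 * (1 + 2 * M / r)
          + lam * Q (1 + r / M) ^ 2 * r ^ 2 := by
      intro r hr
      obtain ⟨hr0, hrδ⟩ := hr
      have hGr : |c₀| / 2 ≤ |G r| := hδsub ⟨hr0, lt_of_lt_of_le hrδ (min_le_left _ _)⟩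
      have hq3 : r ^ 2 + 2 * M * r ≤ 3 * M * r := by nlinarith [hδM, hrδ]
      have hqp := hqpos r hr0
      have hGsq : c₀ ^ 2 / 4 ≤ G r ^ 2 := by
        have h1 : (|c₀| / 2) ^ 2 ≤ |G r| ^ 2 := by
          apply pow_le_pow_left₀ (by positivity) hGr
        rw [sq_abs] at h1
        have : (|c₀| / 2) ^ 2 = c₀ ^ 2 / 4 := by rw [div_pow, sq_abs]; norm_num
        linarith
      rw [hterm r hr0]
      have hGform : G r ^ 2 = (r ^ 2 + 2 * M * r) ^ 2 * du r ^ 2 := by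
        rw [hG]; ring
      have hsecond : 0 ≤ lam * Q (1 + r / M) ^ 2 * r ^ 2 := by positivity
      have hfirst : k * r⁻¹ ≤ (r ^ 2 + 2 * M * r) * du r ^ 2 := by
        have h2 : G r ^ 2 / (r ^ 2 + 2 * M * r) = (r ^ 2 + 2 * M * r) * du r ^ 2 := by
          rw [hGform]; field_simp
        have hMr : (0 : ℝ) < 3 * M * r := by positivity
        calc k * r⁻¹ = (c₀ ^ 2 / 4) / (3 * M * r) := by
              rw [hk]; field_simp; ring
          _ ≤ (c₀ ^ 2 / 4) / (r ^ 2 + 2 * M * r) := by gcongr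
          _ ≤ G r ^ 2 / (r ^ 2 + 2 * M * r) := by gcongr
          _ = (r ^ 2 + 2 * M * r) * du r ^ 2 := h2
      linarith
    -- transfer integrability to k/r and contradict
    have hmono_set : IntegrableOn (fun r =>
        (deriv (fun s => Q (1 + s / M)) r) ^ 2 * r ^ 2 * (1 + 2 * M / r)
          + lam * Q (1 + r / M) ^ 2 * r ^ 2) (Set.Ioo 0 δ) :=
      hInt.mono_set (fun r hr => hr.1)
    have hki : IntegrableOn (fun r : ℝ => k * r⁻¹) (Set.Ioo 0 δ) := by
      apply hmono_set.mono' ((measurable_const.mul measurable_inv).aestronglyMeasurable)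
      filter_upwards [ae_restrict_mem measurableSet_Ioo] with r hr
      have hlow := hlower r hr
      have hknn : 0 < k * r⁻¹ := by
        have : 0 < r⁻¹ := inv_pos.mpr hr.1
        positivity
      show ‖k * r⁻¹‖ ≤ _
      rw [Real.norm_eq_abs, abs_of_pos hknn]
      exact hlow
    have hinv : IntegrableOn (fun r : ℝ => r ^ (-1 : ℝ)) (Set.Ioo 0 δ) := by
      have h2 : IntegrableOn (fun r : ℝ => k⁻¹ * (k * r⁻¹)) (Set.Ioo 0 δ) :=
        hki.const_mul k⁻¹
      apply h2.congr_fun _ measurableSet_Ioo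
      intro r hr
      simp only [Real.rpow_neg_one]
      field_simp
    rw [intervalIntegral.integrableOn_Ioo_rpow_iff hδpos] at hinv
    norm_num at hinv

theorem partI (l : ℕ) (hl : 1 ≤ l) (M : ℝ) (hM : 0 < M) (Q : ℝ → ℝ)
    (hQsm : ContDiffOn ℝ (⊤ : ℕ∞) Q (Set.Ioi 1))
    (hQ0 : ∃ C > (0 : ℝ), ∀ r ∈ Set.Ioo (0 : ℝ) 1,
      |Q (1 + r / M)| ≤ C * (1 + |Real.log r|) ∧ |deriv Q (1 + r / M)| ≤ C / r)
    (hQinf : ∃ C > (0 : ℝ), ∀ r : ℝ, 1 ≤ r → |Q (1 + r / M)| ≤ C * r ^ (-(l + 1 : ℝ))) :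
    IntegrableOn (fun r => Q (1 + r / M) ^ 2 * r ^ 2 / (1 + 2 * M / r)) (Set.Ioi 0) := by
  obtain ⟨C, hC, hC0⟩ := hQ0
  obtain ⟨C', hC', hCinf⟩ := hQinf
  set f : ℝ → ℝ := fun r => Q (1 + r / M) ^ 2 * r ^ 2 / (1 + 2 * M / r) with hf
  have hcontu : ContinuousOn (fun r => Q (1 + r / M)) (Set.Ioi 0) := by
    apply hQsm.continuousOn.comp
    · exact (continuous_const.add (continuous_id.div_const M)).continuousOn
    · intro r hr
      rw [Set.mem_Ioi] at hr ⊢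
      have : 0 < r / M := div_pos hr hM
      linarith
  have hcontf : ContinuousOn f (Set.Ioi 0) := by
    apply ContinuousOn.div
    · exact (hcontu.pow 2).mul (continuous_pow 2).continuousOn
    · exact continuous_const.continuousOn.add
        (continuous_const.continuousOn.div continuous_id.continuousOn
          (fun r hr => ne_of_gt hr))
    · intro r hr
      rw [Set.mem_Ioi] at hr
      have : 0 < 2 * M / r := div_pos (by linarith) hr
      positivity
  -- bound on (0,1)
  have hbnd1 : ∀ r ∈ Set.Ioo (0 : ℝ) 1, ‖f r‖ ≤ 16 * C ^ 2 * r ^ (-(2 : ℝ)⁻¹) := by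
    intro r hr
    obtain ⟨hr0, hr1⟩ := hr
    have hden : (1 : ℝ) ≤ 1 + 2 * M / r := by
      have : 0 < 2 * M / r := div_pos (by linarith) hr0
      linarith
    have hQb := (hC0 r ⟨hr0, hr1⟩).1
    have hlog := auxLog hr0 hr1
    have hQsq : Q (1 + r / M) ^ 2 ≤ (C * (1 + |Real.log r|)) ^ 2 := by
      rw [← sq_abs]
      apply pow_le_pow_left₀ (abs_nonneg _) hQb
    have hQsq2 : (C * (1 + |Real.log r|)) ^ 2 ≤ (C * (4 * r ^ (-(4⁻¹ : ℝ)))) ^ 2 := by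
      apply pow_le_pow_left₀
      · positivity
      · apply mul_le_mul_of_nonneg_left hlog hC.le
    have hrw : (C * (4 * r ^ (-(4⁻¹ : ℝ)))) ^ 2 = 16 * C ^ 2 * r ^ (-(2 : ℝ)⁻¹) := by
      have h14 : (r ^ (-(4⁻¹ : ℝ))) ^ 2 = r ^ (-(2 : ℝ)⁻¹) := by
        rw [← Real.rpow_natCast (r ^ (-(4⁻¹ : ℝ))) 2, ← Real.rpow_mul hr0.le]
        norm_num
      rw [mul_pow, mul_pow, h14]; ring
    have hfnn : 0 ≤ f r := by
      apply div_nonneg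
      · positivity
      · linarith
    rw [Real.norm_eq_abs, abs_of_nonneg hfnn]
    have hr2 : r ^ 2 ≤ 1 := by nlinarith
    calc f r ≤ Q (1 + r / M) ^ 2 * r ^ 2 := div_le_self (by positivity) hden
      _ ≤ Q (1 + r / M) ^ 2 * 1 := by nlinarith [sq_nonneg (Q (1 + r / M))]
      _ = Q (1 + r / M) ^ 2 := mul_one _
      _ ≤ 16 * C ^ 2 * r ^ (-(2 : ℝ)⁻¹) := by
          calc Q (1 + r / M) ^ 2 ≤ (C * (1 + |Real.log r|)) ^ 2 := hQsq
            _ ≤ (C * (4 * r ^ (-(4⁻¹ : ℝ)))) ^ 2 := hQsq2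
            _ = 16 * C ^ 2 * r ^ (-(2 : ℝ)⁻¹) := hrw
  -- integrability on (0,1)
  have hint1 : IntegrableOn f (Set.Ioo 0 1) := by
    have hig : IntegrableOn (fun r : ℝ => 16 * C ^ 2 * r ^ (-(2 : ℝ)⁻¹)) (Set.Ioo 0 1) := by
      have : IntervalIntegrable (fun r : ℝ => r ^ (-(2 : ℝ)⁻¹)) volume 0 1 :=
        intervalIntegral.intervalIntegrable_rpow' (by norm_num)
      rw [intervalIntegrable_iff_integrableOn_Ioo_of_le zero_le_one] at this
      exact (this.const_mul _)
    apply hig.mono' ((hcontf.mono Set.Ioo_subset_Ioi_self).aestronglyMeasurable measurableSet_Ioo)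
    filter_upwards [ae_restrict_mem measurableSet_Ioo] with r hr
    exact hbnd1 r hr
  -- integrability on [1,∞)
  have hbnd2 : ∀ r ∈ Set.Ici (1 : ℝ), ‖f r‖ ≤ C' ^ 2 * r ^ (-(2 : ℝ)) := by
    intro r hr
    rw [Set.mem_Ici] at hr
    have hr0 : (0 : ℝ) < r := by linarith
    have hden : (1 : ℝ) ≤ 1 + 2 * M / r := by
      have : 0 < 2 * M / r := div_pos (by linarith) hr0
      linarith
    have hQb := hCinf r hr
    have hQsq : Q (1 + r / M) ^ 2 ≤ (C' * r ^ (-(l + 1 : ℝ))) ^ 2 := by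
      rw [← sq_abs]
      apply pow_le_pow_left₀ (abs_nonneg _) hQb
    have hfnn : 0 ≤ f r := by
      apply div_nonneg
      · positivity
      · linarith
    rw [Real.norm_eq_abs, abs_of_nonneg hfnn]
    have key : (C' * r ^ (-(l + 1 : ℝ))) ^ 2 * r ^ 2 ≤ C' ^ 2 * r ^ (-(2 : ℝ)) := by
      have h1 : (r ^ (-(l + 1 : ℝ))) ^ 2 = r ^ (-(2 * l + 2 : ℝ)) := by
        rw [← Real.rpow_natCast (r ^ (-(l + 1 : ℝ))) 2, ← Real.rpow_mul hr0.le]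
        norm_num; ring_nf
      have h2 : (r : ℝ) ^ (2 : ℕ) = r ^ ((2 : ℕ) : ℝ) := (Real.rpow_natCast r 2).symm
      rw [mul_pow, h1, mul_assoc, h2, ← Real.rpow_add hr0]
      apply mul_le_mul_of_nonneg_left _ (by positivity)
      apply Real.rpow_le_rpow_of_exponent_le hr
      have : (1 : ℝ) ≤ (l : ℝ) := by exact_mod_cast hl
      push_cast
      linarith
    calc f r ≤ Q (1 + r / M) ^ 2 * r ^ 2 := div_le_self (by positivity) hden
      _ ≤ (C' * r ^ (-(l + 1 : ℝ))) ^ 2 * r ^ 2 := by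
          apply mul_le_mul_of_nonneg_right hQsq (by positivity)
      _ ≤ C' ^ 2 * r ^ (-(2 : ℝ)) := key
  have hint2 : IntegrableOn f (Set.Ici 1) := by
    have hig : IntegrableOn (fun r : ℝ => C' ^ 2 * r ^ (-(2 : ℝ))) (Set.Ici 1) := by
      rw [integrableOn_Ici_iff_integrableOn_Ioi]
      exact (integrableOn_Ioi_rpow_of_lt (by norm_num) zero_lt_one).const_mul _
    apply hig.mono' ((hcontf.mono (Set.Ici_subset_Ioi.mpr zero_lt_one)).aestronglyMeasurable
      measurableSet_Ici)
    filter_upwards [ae_restrict_mem measurableSet_Ici] with r hr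
    exact hbnd2 r hr
  have hunion : Set.Ioo (0 : ℝ) 1 ∪ Set.Ici 1 = Set.Ioi 0 := Set.Ioo_union_Ici_eq_Ioi zero_lt_one
  rw [← hunion]
  exact hint1.union hint2

-- part (ii) as standalone
theorem partII (l : ℕ) (M : ℝ) (hM : 0 < M) (Q : ℝ → ℝ)
    (hQsm : ContDiffOn ℝ (⊤ : ℕ∞) Q (Set.Ioi 1))
    (hODE : ∀ x ∈ Set.Ioi (1 : ℝ),
      (1 - x ^ 2) * deriv (deriv Q) x - 2 * x * deriv Q x + (l * (l + 1) : ℝ) * Q x = 0)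
    (η : ℝ → ℝ) (hη : ContDiff ℝ (⊤ : ℕ∞) η) (hηc : HasCompactSupport η)
    (hηs : tsupport η ⊆ Set.Ioi 0) :
    ∫ r in Set.Ioi (0 : ℝ), Q (1 + r / M) *
        (-(deriv (fun s => s ^ 2 * (1 + 2 * M / s) * deriv η s) r)
          + (l * (l + 1) : ℝ) * η r) = 0 := by
  set lam : ℝ := (l * (l + 1) : ℝ) with hlam
  -- smoothness facts about η
  have hη1 : Differentiable ℝ η := hη.differentiable (by simp)
  have hηi : ContDiff ℝ ∞ η := hη.of_le (by simp)
  have hηd : ContDiff ℝ ∞ (deriv η) := (contDiff_infty_iff_deriv.mp hηi).2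
  have hηd1 : Differentiable ℝ (deriv η) := hηd.differentiable (by simp)
  have hηdd : ContDiff ℝ ∞ (deriv (deriv η)) := (contDiff_infty_iff_deriv.mp hηd).2
  -- the Wronskian-type function
  set W : ℝ → ℝ := fun s => (s ^ 2 + 2 * M * s) * Q (1 + s / M) * deriv η s
      - (s ^ 2 + 2 * M * s) * (deriv Q (1 + s / M) * M⁻¹) * η s with hW
  -- derivative of W on Ioi 0
  have hWd : ∀ r ∈ Set.Ioi (0 : ℝ), HasDerivAt W
      (Q (1 + r / M) * ((2 * r + 2 * M) * deriv η r
        + (r ^ 2 + 2 * M * r) * deriv (deriv η) r) - lam * Q (1 + r / M) * η r) r := by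
    intro r hr
    rw [Set.mem_Ioi] at hr
    have hq : HasDerivAt (fun s : ℝ => s ^ 2 + 2 * M * s) (2 * r + 2 * M) r := by
      have h1 : HasDerivAt (fun s : ℝ => s ^ 2) (2 * r) r := by
        simpa using (hasDerivAt_pow 2 r)
      have h2 : HasDerivAt (fun s : ℝ => 2 * M * s) (2 * M) r := by
        simpa using (hasDerivAt_id r).const_mul (2 * M)
      exact h1.add h2
    have hu := auxU hM hQsm hr
    have hG := auxG (l := l) hM hQsm hODE hr
    have h1 : HasDerivAt (fun s => (s ^ 2 + 2 * M * s) * Q (1 + s / M) * deriv η s)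
        (((2 * r + 2 * M) * Q (1 + r / M) + (r ^ 2 + 2 * M * r) * (deriv Q (1 + r / M) * M⁻¹))
          * deriv η r + (r ^ 2 + 2 * M * r) * Q (1 + r / M) * deriv (deriv η) r) r :=
      (hq.mul hu).mul (hηd1 r).hasDerivAt
    have h2 : HasDerivAt (fun s => (s ^ 2 + 2 * M * s) * (deriv Q (1 + s / M) * M⁻¹) * η s)
        (lam * Q (1 + r / M) * η r
          + (r ^ 2 + 2 * M * r) * (deriv Q (1 + r / M) * M⁻¹) * deriv η r) r :=
      hG.mul (hη1 r).hasDerivAt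
    have := h1.sub h2
    exact this.congr_deriv (by ring)
  -- W vanishes outside tsupport η
  have hWz : ∀ r, r ∉ tsupport η → W r = 0 := by
    intro r hr
    have h1 : η r = 0 := image_eq_zero_of_notMem_tsupport hr
    have h2 : deriv η r = 0 := by
      by_contra h
      exact hr (support_deriv_subset (by simpa using h))
    simp [hW, h1, h2]
  -- bounds for the support
  set K : Set ℝ := tsupport η ∪ {1} with hK
  have hKc : IsCompact K := hηc.union isCompact_singleton
  have hKne : K.Nonempty := ⟨1, Or.inr rfl⟩
  have hKpos : K ⊆ Set.Ioi 0 := by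
    intro r hr
    rcases hr with hr | hr
    · exact hηs hr
    · simp only [Set.mem_singleton_iff] at hr; simp [hr]
  obtain ⟨a, b⟩ := (⟨sInf K, sSup K⟩ : ℝ × ℝ)
  have ha : sInf K ∈ K := hKc.sInf_mem hKne
  have hb : sSup K ∈ K := hKc.sSup_mem hKne
  have hapos : 0 < sInf K := hKpos ha
  have hbpos : 0 < sSup K := hKpos hb
  have hKsub : K ⊆ Set.Icc (sInf K) (sSup K) := fun r hr =>
    ⟨csInf_le hKc.bddBelow hr, le_csSup hKc.bddAbove hr⟩
  set a := sInf K
  set b := sSup K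
  have hab : a ≤ b := le_csSup hKc.bddAbove ha
  -- deriv W vanishes off tsupport η
  have hWdz : ∀ r, r ∉ tsupport η → deriv W r = 0 := by
    intro r hr
    have hopen : IsOpen (tsupport η)ᶜ := (isClosed_tsupport η).isOpen_compl
    have hev : W =ᶠ[nhds r] (fun _ => (0 : ℝ)) :=
      Filter.eventually_of_mem (hopen.mem_nhds hr) (fun s hs => hWz s hs)
    rw [hev.deriv_eq]
    simp
  -- the integrand equals -(deriv W) on Ioi 0
  have hcongr : ∀ r ∈ Set.Ioi (0 : ℝ), Q (1 + r / M) *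
      (-(deriv (fun s => s ^ 2 * (1 + 2 * M / s) * deriv η s) r) + lam * η r)
      = -(deriv W r) := by
    intro r hr
    rw [Set.mem_Ioi] at hr
    have hq : HasDerivAt (fun s : ℝ => s ^ 2 + 2 * M * s) (2 * r + 2 * M) r := by
      have h1 : HasDerivAt (fun s : ℝ => s ^ 2) (2 * r) r := by
        simpa using (hasDerivAt_pow 2 r)
      have h2 : HasDerivAt (fun s : ℝ => 2 * M * s) (2 * M) r := by
        simpa using (hasDerivAt_id r).const_mul (2 * M)
      exact h1.add h2
    have hDeq : deriv (fun s => s ^ 2 * (1 + 2 * M / s) * deriv η s) r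
        = deriv (fun s => (s ^ 2 + 2 * M * s) * deriv η s) r := by
      apply Filter.EventuallyEq.deriv_eq
      filter_upwards [isOpen_Ioi.mem_nhds (Set.mem_Ioi.mpr hr)] with s hs
      rw [Set.mem_Ioi] at hs
      have hs0 : s ≠ 0 := ne_of_gt hs
      field_simp
    have hD : deriv (fun s => (s ^ 2 + 2 * M * s) * deriv η s) r
        = (2 * r + 2 * M) * deriv η r + (r ^ 2 + 2 * M * r) * deriv (deriv η) r :=
      (hq.mul (hηd1 r).hasDerivAt).deriv
    rw [hDeq, hD, (hWd r (Set.mem_Ioi.mpr hr)).deriv]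
    ring
  rw [setIntegral_congr_fun measurableSet_Ioi hcongr]
  rw [integral_neg, neg_eq_zero]
  -- the integral of deriv W over Ioi 0 equals the integral over ℝ
  have h1 : ∫ r in Set.Ioi (0 : ℝ), deriv W r = ∫ r, deriv W r := by
    apply setIntegral_eq_integral_of_forall_compl_eq_zero
    intro r hr
    exact hWdz r (fun h => hr (hηs h))
  have h2 : ∫ r in Set.Ioc (a / 2) (b + 1), deriv W r = ∫ r, deriv W r := by
    apply setIntegral_eq_integral_of_forall_compl_eq_zero
    intro r hr
    simp only [Set.mem_Ioc, not_and_or, not_lt, not_le] at hr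
    apply hWdz
    intro hmem
    have := hKsub (Or.inl hmem)
    rcases hr with hr | hr
    · have : a ≤ r := this.1
      linarith
    · have : r ≤ b := this.2
      linarith
  rw [h1, ← h2]
  have hle : a / 2 ≤ b + 1 := by linarith
  rw [← intervalIntegral.integral_of_le hle]
  have hsub : Set.uIcc (a / 2) (b + 1) ⊆ Set.Ioi (0 : ℝ) := by
    rw [Set.uIcc_of_le hle]
    intro r hr
    have := hr.1
    simp only [Set.mem_Ioi]
    linarith
  have hdiff : ∀ x ∈ Set.uIcc (a / 2) (b + 1), DifferentiableAt ℝ W x := fun x hx =>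
    (hWd x (hsub hx)).differentiableAt
  have hcontu : ContinuousOn (fun r => Q (1 + r / M)) (Set.Ioi 0) := by
    apply hQsm.continuousOn.comp
    · exact (continuous_const.add (continuous_id.div_const M)).continuousOn
    · intro r hr
      rw [Set.mem_Ioi] at hr ⊢
      have : 0 < r / M := div_pos hr hM
      linarith
  have hWderivCont : ContinuousOn (deriv W) (Set.uIcc (a / 2) (b + 1)) := by
    have hF2 : ContinuousOn (fun r => Q (1 + r / M) * ((2 * r + 2 * M) * deriv η r
        + (r ^ 2 + 2 * M * r) * deriv (deriv η) r) - lam * Q (1 + r / M) * η r)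
        (Set.Ioi 0) := by
      apply ContinuousOn.sub
      · exact hcontu.mul (((continuous_const.mul continuous_id).add continuous_const).mul
          hηd.continuous |>.add ((continuous_pow 2 |>.add (continuous_const.mul continuous_id)).mul
          hηdd.continuous)).continuousOn
      · exact (continuous_const.continuousOn.mul hcontu).mul hη.continuous.continuousOn
    apply (hF2.mono hsub).congr
    intro r hr
    exact (hWd r (hsub hr)).deriv
  rw [intervalIntegral.integral_deriv_eq_sub hdiff (hWderivCont.intervalIntegrable)]
  have hz1 : W (b + 1) = 0 := by
    apply hWz
    intro h
    have := (hKsub (Or.inl h)).2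
    linarith
  have hz2 : W (a / 2) = 0 := by
    apply hWz
    intro h
    have := (hKsub (Or.inl h)).1
    linarith
  rw [hz1, hz2, sub_zero]


/-- Negative-mass Schwarzschild (radialized after separation of variables by a spherical
harmonic `Y_l^m`, `Δ_{S²} Y_l^m = −l(l+1) Y_l^m`): for an integer `l ≥ 1` and `M > 0`,
let `Q` be a nonzero solution of the Legendre equation on `(1,∞)` with the behaviour of
the second Legendre function `Q_l` (`Q(1+r/M) = O(|log r|)`, `Q'(1+r/M) = O(1/r)` as
`r → 0⁺` and `Q(1+r/M) = O(r^{−l−1})` at infinity).  Then `φ = Q_l(1+r/M) Y_l^m(θ)`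
satisfies: (i) `φ ∈ H = L²(Ω, r²(1+2M/r)^{−1} dr dσ)`; (ii) `Aφ = 0` in the distribution
sense, i.e. the radial equation holds distributionally on `(0,∞)`; (iii) the energy
`b(φ,φ) = ∫ |∂_r φ|² r²(1+2M/r) + |∇_θ φ|² r²` is infinite.  Hence `A` is not essentially
self-adjoint on `C₀^∞(Ω)`. -/
theorem stmt12 (l : ℕ) (hl : 1 ≤ l) (M : ℝ) (hM : 0 < M) (Q : ℝ → ℝ)
    (hQsm : ContDiffOn ℝ (⊤ : ℕ∞) Q (Set.Ioi 1))
    (hODE : ∀ x ∈ Set.Ioi (1 : ℝ),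
      (1 - x ^ 2) * deriv (deriv Q) x - 2 * x * deriv Q x + (l * (l + 1) : ℝ) * Q x = 0)
    (hQ0 : ∃ C > (0 : ℝ), ∀ r ∈ Set.Ioo (0 : ℝ) 1,
      |Q (1 + r / M)| ≤ C * (1 + |Real.log r|) ∧ |deriv Q (1 + r / M)| ≤ C / r)
    (hQinf : ∃ C > (0 : ℝ), ∀ r : ℝ, 1 ≤ r → |Q (1 + r / M)| ≤ C * r ^ (-(l + 1 : ℝ)))
    (hQne : ∃ x ∈ Set.Ioi (1 : ℝ), Q x ≠ 0) :
    -- (i) `φ ∈ H`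
    IntegrableOn (fun r => Q (1 + r / M) ^ 2 * r ^ 2 / (1 + 2 * M / r)) (Set.Ioi 0) ∧
    -- (ii) `Aφ = 0` in the distribution sense (radial form)
    (∀ η : ℝ → ℝ, ContDiff ℝ (⊤ : ℕ∞) η → HasCompactSupport η → tsupport η ⊆ Set.Ioi 0 →
      ∫ r in Set.Ioi (0 : ℝ), Q (1 + r / M) *
        (-(deriv (fun s => s ^ 2 * (1 + 2 * M / s) * deriv η s) r)
          + (l * (l + 1) : ℝ) * η r) = 0) ∧
    -- (iii) the energy of `φ` is infinite
    ¬ IntegrableOn (fun r =>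
        (deriv (fun s => Q (1 + s / M)) r) ^ 2 * r ^ 2 * (1 + 2 * M / r)
          + (l * (l + 1) : ℝ) * Q (1 + r / M) ^ 2 * r ^ 2) (Set.Ioi 0) := by
  exact ⟨partI l hl M hM Q hQsm hQ0 hQinf,
    fun η h1 h2 h3 => partII l M hM Q hQsm hODE η h1 h2 h3,
    partIII l hl M hM Q hQsm hODE hQ0 hQinf hQne⟩
end

section
/- Let L be a symmetric operator on a Hilbert space H defined on C_0^∞(Ω), associated to a nonnegative closable form b, with energy space E (the maximal form domain) and E_0 the closure of C_0^∞(Ω) in E. Then L has exactly one self-adjoint extension with domain contained in E if and only if E_0 = E. -/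
/-!
Closedness of `B` makes the form domain `E`, with inner product `B x y + ⟪x, y⟫`, a Hilbert space
`W` continuously embedded in `H` by `ι`. For every closed subspace `W'` of `W` containing the test
functions, `(ι' ι'†)⁻¹ - 1` with `ι' = ι|W'` is a self-adjoint extension of `L` with domain in
`E` (the Friedrichs construction). Taking `W' = W` and `W' = E₀` gives two such extensions;
their domains are `ι (ι† H)` and a subset of `ι E₀`, and since `ι† H` is dense in `W`, they agree
only if `E₀ = W`. Conversely, if the test functions are dense in `W`, every self-adjoint extension
`S` with domain in `E` satisfies `⟪(S + 1) (ι w), ι v⟫ = ⟪w, v⟫_W` for `v` in a dense set, hence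
for all `v`; so `S ≤ (ι ι†)⁻¹ - 1`, and a self-adjoint operator has no proper self-adjoint
extension.
-/

open Filter Topology
open scoped RealInnerProductSpace InnerProductSpace InnerProduct

theorem completeSpace_of_norm_sq {V : Type*} [NormedAddCommGroup V]
    (h : ∀ u : ℕ → V, (∀ ε > (0 : ℝ), ∃ N, ∀ m ≥ N, ∀ k ≥ N, ‖u m - u k‖ ^ 2 < ε) →
      ∃ x, Tendsto (fun m => ‖u m - x‖ ^ 2) atTop (𝓝 0)) : CompleteSpace V := by
  refine Metric.complete_of_cauchySeq_tendsto fun u hu => ?_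
  obtain ⟨x, hx⟩ := h u fun ε hε => by
    obtain ⟨N, hN⟩ := Metric.cauchySeq_iff.1 hu (√ε) (by positivity)
    refine ⟨N, fun m hm k hk => ?_⟩
    rw [← Real.lt_sqrt (norm_nonneg _), ← dist_eq_norm]
    exact hN m hm k hk
  refine ⟨x, tendsto_iff_norm_sub_tendsto_zero.2 ?_⟩
  simpa [Real.sqrt_sq (norm_nonneg _)] using hx.sqrt

theorem dense_iff_forall_exists_norm_sub_sq_lt {V : Type*} [SeminormedAddCommGroup V]
    {s : Set V} : Dense s ↔ ∀ x, ∀ ε > (0 : ℝ), ∃ y ∈ s, ‖x - y‖ ^ 2 < ε := by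
  rw [Metric.dense_iff]
  refine ⟨fun h x ε hε => ?_, fun h x r hr => ?_⟩
  · obtain ⟨y, hy, hys⟩ := h x (√ε) (by positivity)
    refine ⟨y, hys, ?_⟩
    rw [← Real.lt_sqrt (norm_nonneg _), ← dist_eq_norm, dist_comm]
    exact hy
  · obtain ⟨y, hys, hy⟩ := h x (r ^ 2) (by positivity)
    refine ⟨y, ?_, hys⟩
    rw [Metric.mem_ball, dist_comm, dist_eq_norm]
    exact (pow_lt_pow_iff_left₀ (norm_nonneg _) hr.le two_ne_zero).1 hy

namespace LinearPMap

variable {𝕜 E F : Type*} [RCLike 𝕜] [NormedAddCommGroup E] [InnerProductSpace 𝕜 E]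
  [CompleteSpace E] [NormedAddCommGroup F] [InnerProductSpace 𝕜 F]

theorem adjoint_le_adjoint {S T : E →ₗ.[𝕜] F} (hS : Dense (S.domain : Set E)) (h : S ≤ T) :
    T† ≤ S† :=
  IsFormalAdjoint.le_adjoint hS fun x y => by
    rw [show S x = T ⟨x, h.1 x.2⟩ from h.2 rfl]
    exact (adjoint_isFormalAdjoint (hS.mono h.1)).symm ⟨x, h.1 x.2⟩ y

theorem _root_.IsSelfAdjoint.isFormalAdjoint {A : E →ₗ.[𝕜] E} (hA : IsSelfAdjoint A) :
    A.IsFormalAdjoint A := by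
  simpa only [isSelfAdjoint_def.mp hA] using adjoint_isFormalAdjoint hA.dense_domain

theorem _root_.IsSelfAdjoint.eq_of_le {S T : E →ₗ.[𝕜] E} (hS : IsSelfAdjoint S)
    (hT : IsSelfAdjoint T) (h : S ≤ T) : S = T := by
  have hTS : T ≤ S := by
    simpa only [isSelfAdjoint_def.mp hS, isSelfAdjoint_def.mp hT] using
      adjoint_le_adjoint hS.dense_domain h
  exact eq_of_le_of_domain_eq h (le_antisymm h.1 hTS.1)

theorem IsFormalAdjoint.isSelfAdjoint_of_surjective {T : E →ₗ.[𝕜] E}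
    (hT : T.IsFormalAdjoint T) (hsurj : ∀ f : E, ∃ u : T.domain, T u + u = f) :
    IsSelfAdjoint T := by
  have symm_add (u v : T.domain) : ⟪T u + u, (v : E)⟫_𝕜 = ⟪(u : E), T v + v⟫_𝕜 := by
    rw [inner_add_left, inner_add_right, hT]
  have hdense : Dense (T.domain : Set E) := by
    rw [Submodule.dense_iff_topologicalClosure_eq_top, Submodule.topologicalClosure_eq_top_iff,
      Submodule.eq_bot_iff]
    intro h hh
    obtain ⟨u, rfl⟩ := hsurj h
    obtain ⟨v, hv⟩ := hsurj u
    have : ⟪(u : E), u⟫_𝕜 = 0 := calc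
      _ = ⟪(u : E), T v + v⟫_𝕜 := by rw [hv]
      _ = ⟪T u + u, (v : E)⟫_𝕜 := (symm_add u v).symm
      _ = 0 := Submodule.inner_left_of_mem_orthogonal v.2 hh
    simp [show u = 0 from Subtype.ext (inner_self_eq_zero.mp this)]
  have hle : T ≤ T† := hT.le_adjoint hdense
  refine (eq_of_le_of_domain_eq hle (le_antisymm hle.1 fun w hw => ?_)).symm
  obtain ⟨u, hu⟩ := hsurj ((T†) ⟨w, hw⟩ + w)
  suffices w = u from this ▸ u.2
  refine ext_inner_left 𝕜 fun v => ?_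
  obtain ⟨p, rfl⟩ := hsurj v
  calc ⟪T p + p, w⟫_𝕜 = ⟪(p : E), (T†) ⟨w, hw⟩ + w⟫_𝕜 := by
        rw [inner_add_left, inner_add_right,
          (adjoint_isFormalAdjoint hdense).symm p ⟨w, hw⟩]
    _ = ⟪T p + p, (u : E)⟫_𝕜 := by rw [← hu, symm_add]

end LinearPMap

namespace ContinuousLinearMap

variable {𝕜 W H : Type*} [RCLike 𝕜] [NormedAddCommGroup W] [InnerProductSpace 𝕜 W]
  [CompleteSpace W] [NormedAddCommGroup H] [InnerProductSpace 𝕜 H] [CompleteSpace H]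
  (ι : W →L[𝕜] H)

/-- The operator `(ι ι†)⁻¹ - 1`. For `ι` injective with dense range it is the operator associated
with the closed form `(ι u, ι v) ↦ ⟪u, v⟫_W - ⟪ι u, ι v⟫_H`: `ι w` lies in its domain with image
`f` iff `⟪f + ι w, ι v⟫_H = ⟪w, v⟫_W` for all `v`. -/
noncomputable def formOperator : H →ₗ.[𝕜] H :=
  (-LinearMap.id : H →ₗ[𝕜] H) +ᵥ (((ι ∘L ι† : H →L[𝕜] H) : H →ₗ[𝕜] H).toPMap ⊤).inverse

theorem formOperator_domain : (formOperator ι).domain = (ι ∘L ι†).range := by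
  ext x
  simp [formOperator, LinearPMap.inverse_domain, LinearMap.toPMap]

theorem formOperator_domain_le_range : (formOperator ι).domain ≤ ι.range := by
  rw [formOperator_domain]
  exact LinearMap.range_comp_le_range (ι† : H →ₗ[𝕜] W) (ι : W →ₗ[𝕜] H)

variable {ι}

theorem injective_adjoint (hdr : DenseRange ι) : Function.Injective (ι† : H → W) := by
  rw [← coe_coe, ← LinearMap.ker_eq_bot, ← orthogonal_range,
    ← Submodule.topologicalClosure_eq_top_iff, ← Submodule.dense_iff_topologicalClosure_eq_top]
  simpa [DenseRange, LinearMap.coe_range] using hdr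

variable (hι : Function.Injective ι) (hdr : DenseRange ι)
include hι hdr

theorem formOperator_add_eq (x : (formOperator ι).domain) {f : H} (hf : ι ((ι†) f) = x) :
    formOperator ι x + x = f := by
  have hK : (((ι ∘L ι† : H →L[𝕜] H) : H →ₗ[𝕜] H).toPMap ⊤).toFun.ker = ⊥ :=
    LinearMap.ker_eq_bot.2 fun a b hab => Subtype.ext (hι.comp (injective_adjoint hdr) hab)
  have := LinearPMap.inverse_apply_eq hK (y := x) (x := ⟨f, trivial⟩) hf
  change -(x : H) + (((ι ∘L ι† : H →L[𝕜] H) : H →ₗ[𝕜] H).toPMap ⊤).inverse x + x = f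
  rw [this, neg_add_cancel_comm]

theorem apply_adjoint_formOperator_add (x : (formOperator ι).domain) :
    ι ((ι†) (formOperator ι x + x)) = x := by
  have hx : (x : H) ∈ (ι ∘L ι†).range := formOperator_domain ι ▸ x.2
  obtain ⟨f, hf⟩ := hx
  rw [formOperator_add_eq hι hdr x hf, ← hf]
  rfl

theorem le_formOperator_iff {S : H →ₗ.[𝕜] H} :
    S ≤ formOperator ι ↔ ∀ x : S.domain, ι ((ι†) (S x + x)) = x := by
  refine ⟨fun h x => ?_, fun h => ⟨fun x hx => ?_, fun x y hxy => ?_⟩⟩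
  · rw [show S x = formOperator ι ⟨x, h.1 x.2⟩ from h.2 rfl]
    exact apply_adjoint_formOperator_add hι hdr _
  · rw [formOperator_domain]
    exact ⟨S ⟨x, hx⟩ + x, h ⟨x, hx⟩⟩
  · have := formOperator_add_eq hι hdr y ((h x).trans hxy)
    rw [← hxy] at this
    exact (add_right_cancel this).symm

theorem surjective_formOperator_add (f : H) :
    ∃ u : (formOperator ι).domain, formOperator ι u + u = f :=
  ⟨⟨ι ((ι†) f), formOperator_domain ι ▸ LinearMap.mem_range_self _ f⟩,
    formOperator_add_eq hι hdr _ rfl⟩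

theorem isSelfAdjoint_formOperator : IsSelfAdjoint (formOperator ι) := by
  refine LinearPMap.IsFormalAdjoint.isSelfAdjoint_of_surjective (fun x y => ?_)
    (surjective_formOperator_add hι hdr)
  have key : ⟪formOperator ι x + x, (y : H)⟫_𝕜 = ⟪(x : H), formOperator ι y + y⟫_𝕜 := by
    conv_lhs => rw [← apply_adjoint_formOperator_add hι hdr y]
    conv_rhs => rw [← apply_adjoint_formOperator_add hι hdr x]
    rw [← adjoint_inner_left, adjoint_inner_right]
  rwa [inner_add_left, inner_add_right, add_left_inj] at key

omit hdr in
theorem eq_top_of_formOperator_domain_le_map {W₀ : Submodule 𝕜 W} (hW₀ : IsClosed (W₀ : Set W))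
    (h : (formOperator ι).domain ≤ W₀.map (ι : W →ₗ[𝕜] H)) : W₀ = ⊤ := by
  have hrange : ι†.range ≤ W₀ := by
    rintro _ ⟨f, rfl⟩
    obtain ⟨w, hw, hwf⟩ := h (formOperator_domain ι ▸ LinearMap.mem_range_self _ f)
    exact hι hwf ▸ hw
  rw [eq_top_iff, ← Submodule.bot_orthogonal_eq_top,
    ← (LinearMap.ker_eq_bot (f := (ι : W →ₗ[𝕜] H))).2 hι, orthogonal_ker]
  exact (ι†.range).topologicalClosure_minimal hrange hW₀

omit hdr in
theorem le_formOperator_comp_subtypeL (W₀ : Submodule 𝕜 W) [CompleteSpace W₀]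
    (hdr₀ : DenseRange (ι ∘L W₀.subtypeL)) {S : H →ₗ.[𝕜] H} (hS : S ≤ formOperator ι)
    (hSW : S.domain ≤ W₀.map (ι : W →ₗ[𝕜] H)) : S ≤ formOperator (ι ∘L W₀.subtypeL) := by
  refine (le_formOperator_iff (fun a b h => Subtype.ext (hι h)) hdr₀).2 fun x => ?_
  obtain ⟨w, hw, hwx⟩ := hSW x.2
  have hdr : DenseRange ι := hdr₀.mono (Set.range_comp_subset_range _ _)
  have hadj : (ι†) (S x + x) = w := hι (((le_formOperator_iff hι hdr).1 hS x).trans hwx.symm)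
  rw [adjoint_comp, Submodule.adjoint_subtypeL, comp_apply, comp_apply, hadj,
    Submodule.orthogonalProjectionOnto_mem_subspace_eq_self ⟨w, hw⟩]
  exact hwx

theorem eq_formOperator_of_dense {L S : H →ₗ.[𝕜] H} (hL : L ≤ formOperator ι)
    (hD : Dense (L.domain.comap (ι : W →ₗ[𝕜] H) : Set W)) (hS : IsSelfAdjoint S) (hLS : L ≤ S)
    (hSι : S.domain ≤ ι.range) : S = formOperator ι := by
  refine hS.eq_of_le (isSelfAdjoint_formOperator hι hdr)
    ((le_formOperator_iff hι hdr).2 fun x => ?_)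
  obtain ⟨w, hw : ι w = x⟩ := hSι x.2
  suffices (ι†) (S x + x) = w by rw [this, hw]
  rw [← sub_eq_zero]
  refine hD.eq_zero_of_inner_left 𝕜 fun v hv => ?_
  let y : L.domain := ⟨ι v, hv⟩
  have hy : (ι†) (L y + y) = v := hι ((le_formOperator_iff hι hdr).1 hL y)
  have hSy : L y = S ⟨y, hLS.1 y.2⟩ := hLS.2 rfl
  calc ⟪(ι†) (S x + x) - w, v⟫_𝕜 = ⟪S x + x, (y : H)⟫_𝕜 - ⟪w, v⟫_𝕜 := by
        rw [inner_sub_left, adjoint_inner_left]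
    _ = ⟪ι w, L y + y⟫_𝕜 - ⟪w, (ι†) (L y + y)⟫_𝕜 := by
        rw [inner_add_left, hS.isFormalAdjoint x ⟨y, hLS.1 y.2⟩, ← inner_add_right, ← hSy, hw,
          hy]
    _ = 0 := by rw [adjoint_inner_right, sub_self]

omit hdr in
theorem dense_comap_of_forall_eq_formOperator {L : H →ₗ.[𝕜] H} (hL : L ≤ formOperator ι)
    (hLd : Dense (L.domain : Set H)) (hLι : L.domain ≤ ι.range)
    (huniq : ∀ T : H →ₗ.[𝕜] H, L ≤ T → IsSelfAdjoint T → T.domain ≤ ι.range →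
      T = formOperator ι) :
    Dense (L.domain.comap (ι : W →ₗ[𝕜] H) : Set W) := by
  set W₀ := (L.domain.comap (ι : W →ₗ[𝕜] H)).topologicalClosure
  have : CompleteSpace W₀ := (Submodule.isClosed_topologicalClosure _).completeSpace_coe
  have hLW₀ : L.domain ≤ W₀.map (ι : W →ₗ[𝕜] H) := fun y hy => by
    obtain ⟨w, rfl⟩ := hLι hy
    exact ⟨w, Submodule.le_topologicalClosure _ hy, rfl⟩
  have hrange₀ : (ι ∘L W₀.subtypeL).range = W₀.map (ι : W →ₗ[𝕜] H) := by
    rw [toLinearMap_comp, LinearMap.range_comp]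
    exact congrArg _ W₀.range_subtype
  have hdr₀ : DenseRange (ι ∘L W₀.subtypeL) := by
    rw [DenseRange, ← coe_coe, ← LinearMap.coe_range, hrange₀]
    exact hLd.mono hLW₀
  have heq := huniq _ (le_formOperator_comp_subtypeL hι W₀ hdr₀ hL hLW₀)
    (isSelfAdjoint_formOperator (fun a b h => Subtype.ext (hι h)) hdr₀)
    ((formOperator_domain_le_range _).trans (hrange₀ ▸ LinearMap.map_le_range))
  rw [Submodule.dense_iff_topologicalClosure_eq_top]
  exact eq_top_of_formOperator_domain_le_map hι (Submodule.isClosed_topologicalClosure _)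
    (heq ▸ hrange₀ ▸ formOperator_domain_le_range _)

end ContinuousLinearMap

section

variable {E : Type*} [NormedAddCommGroup E] [InnerProductSpace ℝ E]

/-- The form domain `E` of `B` with the energy inner product `B x y + ⟪x, y⟫`; the form is
closed exactly when this space is complete. -/
@[nolint unusedArguments]
def EnergySpace (B : E →ₗ[ℝ] E →ₗ[ℝ] ℝ) (_hB : B.IsPosSemidef) : Type _ := E

namespace EnergySpace

variable (B : E →ₗ[ℝ] E →ₗ[ℝ] ℝ) (hB : B.IsPosSemidef)

instance : AddCommGroup (EnergySpace B hB) := inferInstanceAs (AddCommGroup E)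
instance : Module ℝ (EnergySpace B hB) := inferInstanceAs (Module ℝ E)

def linearEquiv : EnergySpace B hB ≃ₗ[ℝ] E := LinearEquiv.refl ℝ E

noncomputable abbrev innerProductCore : InnerProductSpace.Core ℝ (EnergySpace B hB) where
  inner x y := B (linearEquiv B hB x) (linearEquiv B hB y) +
    ⟪linearEquiv B hB x, linearEquiv B hB y⟫_ℝ
  conj_inner_symm x y := congrArg₂ (· + ·) (hB.isSymm.eq _ _) (real_inner_comm _ _)
  re_inner_nonneg x := add_nonneg (hB.isNonneg.nonneg _) real_inner_self_nonneg
  add_left x y z := by simp only [map_add, LinearMap.add_apply, inner_add_left]; ring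
  smul_left x y r := by
    simp only [map_smul, LinearMap.smul_apply, smul_eq_mul, real_inner_smul_left, conj_trivial]
    ring
  definite x hx := by
    have hB0 := hB.isNonneg.nonneg (linearEquiv B hB x)
    have : ⟪linearEquiv B hB x, linearEquiv B hB x⟫_ℝ = 0 :=
      le_antisymm (by linarith [hx]) real_inner_self_nonneg
    exact (linearEquiv B hB).map_eq_zero_iff.1 (inner_self_eq_zero.1 this)

noncomputable instance : NormedAddCommGroup (EnergySpace B hB) :=
  (innerProductCore B hB).toNormedAddCommGroup

noncomputable instance : InnerProductSpace ℝ (EnergySpace B hB) :=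
  .ofCore (innerProductCore B hB).toCore

variable {B hB}

theorem inner_def (x y : EnergySpace B hB) :
    ⟪x, y⟫_ℝ = B (linearEquiv B hB x) (linearEquiv B hB y) +
      ⟪linearEquiv B hB x, linearEquiv B hB y⟫_ℝ := rfl

theorem norm_sq_eq (x : EnergySpace B hB) :
    ‖x‖ ^ 2 = B (linearEquiv B hB x) (linearEquiv B hB x) + ‖linearEquiv B hB x‖ ^ 2 := by
  rw [← real_inner_self_eq_norm_sq, inner_def, real_inner_self_eq_norm_sq]

theorem norm_linearEquiv_le (x : EnergySpace B hB) : ‖linearEquiv B hB x‖ ≤ ‖x‖ := by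
  refine (pow_le_pow_iff_left₀ (norm_nonneg _) (norm_nonneg _) two_ne_zero).1 ?_
  rw [norm_sq_eq]
  linarith [hB.isNonneg.nonneg (linearEquiv B hB x)]

variable (B hB)

noncomputable def inclusion : EnergySpace B hB →L[ℝ] E :=
  (linearEquiv B hB).toLinearMap.mkContinuous 1 fun x => by
    simpa using norm_linearEquiv_le x

variable {B hB}

theorem completeSpace
    (hclosed : ∀ u : ℕ → E, (∀ ε > (0 : ℝ), ∃ N, ∀ m ≥ N, ∀ k ≥ N,
        B (u m - u k) (u m - u k) + ‖u m - u k‖ ^ 2 < ε) →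
      ∃ x, Tendsto (fun m => B (u m - x) (u m - x) + ‖u m - x‖ ^ 2) atTop (𝓝 0)) :
    CompleteSpace (EnergySpace B hB) := by
  refine completeSpace_of_norm_sq fun u hu => ?_
  obtain ⟨x, hx⟩ := hclosed (linearEquiv B hB ∘ u) fun ε hε =>
    (hu ε hε).imp fun N hN m hm k hk => (norm_sq_eq (u m - u k)).symm.trans_lt (hN m hm k hk)
  exact ⟨(linearEquiv B hB).symm x, hx.congr fun m => (norm_sq_eq _).symm⟩

end EnergySpace

end

section FormDomain

open ContinuousLinearMap

variable {H : Type*} [NormedAddCommGroup H] [InnerProductSpace ℝ H] {E : Submodule ℝ H}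
  {B : E →ₗ[ℝ] E →ₗ[ℝ] ℝ} (hB : B.IsPosSemidef)

noncomputable def energyEmbedding : EnergySpace B hB →L[ℝ] H :=
  E.subtypeL ∘L EnergySpace.inclusion B hB

theorem energyEmbedding_injective : Function.Injective (energyEmbedding hB) :=
  Subtype.val_injective.comp (EnergySpace.linearEquiv B hB).injective

theorem range_energyEmbedding : (energyEmbedding hB).range = E := by
  ext x
  refine ⟨fun ⟨v, hv⟩ => hv ▸ (EnergySpace.linearEquiv B hB v).2, fun hx => ?_⟩
  exact ⟨(EnergySpace.linearEquiv B hB).symm ⟨x, hx⟩, rfl⟩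

theorem denseRange_energyEmbedding (hE : Dense (E : Set H)) :
    DenseRange (energyEmbedding hB) := by
  rwa [DenseRange, ← coe_coe, ← LinearMap.coe_range, range_energyEmbedding]

theorem le_formOperator_energyEmbedding [CompleteSpace H] [CompleteSpace (EnergySpace B hB)]
    (hE : Dense (E : Set H)) {L : H →ₗ.[ℝ] H} (hDE : L.domain ≤ E)
    (hBL : ∀ (x : L.domain) (y : E), B ⟨x, hDE x.2⟩ y = ⟪L x, (y : H)⟫_ℝ) :
    L ≤ formOperator (energyEmbedding hB) := by
  refine (le_formOperator_iff (energyEmbedding_injective hB)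
    (denseRange_energyEmbedding hB hE)).2 fun x => ?_
  suffices ((energyEmbedding hB)†) (L x + x) =
      (EnergySpace.linearEquiv B hB).symm ⟨x, hDE x.2⟩ by
    rw [this]
    rfl
  refine ext_inner_right ℝ fun v => ?_
  rw [adjoint_inner_left, inner_add_left, EnergySpace.inner_def, LinearEquiv.apply_symm_apply,
    hBL]
  rfl

theorem dense_comap_energyEmbedding_iff {L : H →ₗ.[ℝ] H} (hDE : L.domain ≤ E) :
    Dense (L.domain.comap (energyEmbedding hB : EnergySpace B hB →ₗ[ℝ] H) :
      Set (EnergySpace B hB)) ↔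
    ∀ x : E, ∀ ε > (0 : ℝ), ∃ y : L.domain,
      B (x - ⟨y, hDE y.2⟩) (x - ⟨y, hDE y.2⟩) + ‖(x : H) - y‖ ^ 2 < ε := by
  rw [dense_iff_forall_exists_norm_sub_sq_lt]
  refine forall_congr' fun x => forall₂_congr fun ε _ =>
    ⟨fun ⟨v, hv, hlt⟩ => ?_, fun ⟨y, hlt⟩ => ?_⟩
  · exact ⟨⟨_, hv⟩, (EnergySpace.norm_sq_eq _).symm.trans_lt hlt⟩
  · exact ⟨(EnergySpace.linearEquiv B hB).symm ⟨y, hDE y.2⟩, y.2,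
      (EnergySpace.norm_sq_eq _).trans_lt hlt⟩

end FormDomain

theorem stmt15_general {H : Type*} [NormedAddCommGroup H] [InnerProductSpace ℝ H] [CompleteSpace H]
    (L : H →ₗ.[ℝ] H) (hdense : Dense (L.domain : Set H))
    (E : Submodule ℝ H) (hDE : L.domain ≤ E)
    (B : E →ₗ[ℝ] E →ₗ[ℝ] ℝ)
    (hBsymm : ∀ x y : E, B x y = B y x) (hBnn : ∀ x : E, 0 ≤ B x x)
    (hBagree : ∀ (x : L.domain) (y : E), B ⟨(x : H), hDE x.2⟩ y = ⟪L x, (y : H)⟫)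
    -- the form is closed: `E` is complete for the form norm `√(B x x + ‖x‖²)`
    (hclosed : ∀ u : ℕ → E,
      (∀ ε > (0 : ℝ), ∃ N, ∀ m ≥ N, ∀ k ≥ N,
        B (u m - u k) (u m - u k) + ‖((u m - u k : E) : H)‖ ^ 2 < ε) →
      ∃ x : E, Tendsto (fun m => B (u m - x) (u m - x) + ‖((u m - x : E) : H)‖ ^ 2)
        atTop (nhds 0)) :
    (∃! T : H →ₗ.[ℝ] H, L ≤ T ∧ IsSelfAdjoint T ∧ (T.domain : Set H) ⊆ (E : Set H)) ↔
    (∀ x : E, ∀ ε > (0 : ℝ), ∃ y : L.domain,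
      B (x - ⟨(y : H), hDE y.2⟩) (x - ⟨(y : H), hDE y.2⟩) + ‖(x : H) - (y : H)‖ ^ 2 < ε) := by
  have hB : B.IsPosSemidef := ⟨⟨hBsymm⟩, ⟨hBnn⟩⟩
  have := EnergySpace.completeSpace (hB := hB) hclosed
  have hE : Dense (E : Set H) := hdense.mono hDE
  have hι := energyEmbedding_injective hB
  have hdr := denseRange_energyEmbedding hB hE
  have hL := le_formOperator_energyEmbedding hB hE hDE hBagree
  have hsa := ContinuousLinearMap.isSelfAdjoint_formOperator hι hdr
  have hdom : (energyEmbedding hB).formOperator.domain ≤ E :=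
    (energyEmbedding hB).formOperator_domain_le_range.trans (range_energyEmbedding hB).le
  have hLι : L.domain ≤ (energyEmbedding hB).range := (range_energyEmbedding hB).ge.trans' hDE
  refine Iff.trans ?_ (dense_comap_energyEmbedding_iff hB hDE)
  constructor
  · rintro ⟨T, -, huniq⟩
    refine ContinuousLinearMap.dense_comap_of_forall_eq_formOperator hι hL hdense hLι
      fun S hLS hS hSE => ?_
    exact (huniq S ⟨hLS, hS, hSE.trans (range_energyEmbedding hB).le⟩).trans
      (huniq _ ⟨hL, hsa, hdom⟩).symm
  · intro hD
    refine ⟨_, ⟨hL, hsa, hdom⟩, fun S ⟨hLS, hS, hSE⟩ => ?_⟩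
    exact ContinuousLinearMap.eq_formOperator_of_dense hι hdr hL hD hS hLS
      (hSE.trans (range_energyEmbedding hB).ge)

/-- Abstract characterization of the alternative well-posedness property: a densely defined
symmetric nonnegative operator `L` on a Hilbert space `H`, associated with a closed
nonnegative symmetric form `B` with (maximal) form domain `E`, has exactly one self-adjoint
extension with domain contained in `E` if and only if `E₀ = E`, where `E₀` is the closure
of the test functions (the domain of `L`) in `E` for the form norm. -/
theorem stmt15 {H : Type*} [NormedAddCommGroup H] [InnerProductSpace ℝ H] [CompleteSpace H]
    (L : H →ₗ.[ℝ] H) (hdense : Dense (L.domain : Set H))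
    (hsymm : ∀ x y : L.domain, ⟪L x, (y : H)⟫ = ⟪(x : H), L y⟫)
    (hnn : ∀ x : L.domain, 0 ≤ ⟪L x, (x : H)⟫)
    (E : Submodule ℝ H) (hDE : L.domain ≤ E)
    (B : E →ₗ[ℝ] E →ₗ[ℝ] ℝ)
    (hBsymm : ∀ x y : E, B x y = B y x) (hBnn : ∀ x : E, 0 ≤ B x x)
    (hBagree : ∀ (x : L.domain) (y : E), B ⟨(x : H), hDE x.2⟩ y = ⟪L x, (y : H)⟫)
    -- the form is closed: `E` is complete for the form norm `√(B x x + ‖x‖²)`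
    (hclosed : ∀ u : ℕ → E,
      (∀ ε > (0 : ℝ), ∃ N, ∀ m ≥ N, ∀ k ≥ N,
        B (u m - u k) (u m - u k) + ‖((u m - u k : E) : H)‖ ^ 2 < ε) →
      ∃ x : E, Tendsto (fun m => B (u m - x) (u m - x) + ‖((u m - x : E) : H)‖ ^ 2)
        atTop (nhds 0)) :
    (∃! T : H →ₗ.[ℝ] H, L ≤ T ∧ IsSelfAdjoint T ∧ (T.domain : Set H) ⊆ (E : Set H)) ↔
    (∀ x : E, ∀ ε > (0 : ℝ), ∃ y : L.domain,
      B (x - ⟨(y : H), hDE y.2⟩) (x - ⟨(y : H), hDE y.2⟩) + ‖(x : H) - (y : H)‖ ^ 2 < ε) :=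
  stmt15_general L hdense E hDE B hBsymm hBnn hBagree hclosed
end

section
/- For the characteristic Cauchy (Goursat/Riemann) problem associated to the operator L(φ) = ∂_{ξη}φ + (1/(2(ξ+η)))(∂_ξ φ + ∂_η φ), the Riemann function R(ξ,η;ξ₀,η₀) = √((ξ+η)/(ξ₀+η₀)) · ₂F₁(1/2, 1/2; 1; w) with w = −(ξ−ξ₀)(η−η₀)/((ξ₀+η₀)(ξ+η)) satisfies: (a) L*_{(ξ,η)}(R) = 0 where L*(ψ) = ∂_{ξη}ψ − ∂_ξ(ψ/(2(ξ+η))) − ∂_η(ψ/(2(ξ+η))); (b) on the characteristic η = η₀: ∂_ξ R = R/(2(ξ+η)); on ξ = ξ₀: ∂_η R = R/(2(ξ+η)); (c) R(ξ₀,η₀;ξ₀,η₀) = 1. -/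
open scoped BigOperators

/-- The Gauss hypergeometric function `₂F₁(1/2, 1/2; 1; w)`, via its power series. -/
noncomputable def gauss2F1half (w : ℝ) : ℝ :=
  ∑' k : ℕ, ((∏ i ∈ Finset.range k, ((1 : ℝ) / 2 + i)) / (Nat.factorial k)) ^ 2 * w ^ k

/-- The argument `w = −(ξ−ξ₀)(η−η₀)/((ξ₀+η₀)(ξ+η))` of the Riemann function. -/
noncomputable def riemannW (p₀ p : ℝ × ℝ) : ℝ :=
  -((p.1 - p₀.1) * (p.2 - p₀.2)) / ((p₀.1 + p₀.2) * (p.1 + p.2))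

/-- The Riemann function `R(ξ,η;ξ₀,η₀) = √((ξ+η)/(ξ₀+η₀)) ₂F₁(1/2,1/2;1;w)`. -/
noncomputable def riemannR (p₀ p : ℝ × ℝ) : ℝ :=
  Real.sqrt ((p.1 + p.2) / (p₀.1 + p₀.2)) * gauss2F1half (riemannW p₀ p)

/-!
Write `s = ξ + η`, `c = ξ₀ + η₀`, `F = ₂F₁(1/2, 1/2; 1; ·)` and `R = √(s/c) F(w)`.
On the characteristics `w` vanishes identically, so only the square-root factor contributes
to the derivative along them, which gives (b); (c) is `F(0) = 1`. For (a), the first-order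
terms of `∂_η ∂_ξ R` cancel against `∂_ξ (R/(2s)) + ∂_η (R/(2s))`, leaving
`L* R = √(s/c) (F''(w) w_ξ w_η + F'(w) w_ξη + F(w)/(4s²))`.
Since `w_ξ w_η = -w(1-w)/s²` and `w_ξη = (2w-1)/s²`, this is `-√(s/c)/s²` times
`w(1-w)F'' + (1-2w)F' - F/4`, which vanishes because the coefficients of `F` satisfy
`(n+1)² aₙ₊₁ = (n+1/2)² aₙ`.
All partial derivatives are computed as one-variable derivatives along coordinate lines.
-/

open Filter Topology

noncomputable section

def powerSum (c : ℕ → ℝ) (w : ℝ) : ℝ := ∑' n, c n * w ^ n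

def derivCoeff (c : ℕ → ℝ) (n : ℕ) : ℝ := (n + 1) * c (n + 1)

section PowerSeries

variable {c : ℕ → ℝ} {C w : ℝ}

lemma summable_mul_pow_of_abs_le (hc : ∀ n, |c n| ≤ C * (n + 1)) (hw : |w| < 1) :
    Summable (fun n => c n * w ^ n) := by
  have hgeom : Summable (fun n : ℕ => C * ((n : ℝ) ^ 1 * |w| ^ n + |w| ^ n)) :=
    ((summable_pow_mul_geometric_of_norm_lt_one 1 (by simpa using hw)).add
      (summable_geometric_of_lt_one (abs_nonneg w) hw)).mul_left C
  refine .of_norm_bounded hgeom fun n => ?_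
  rw [Real.norm_eq_abs, abs_mul, abs_pow]
  calc |c n| * |w| ^ n ≤ C * (n + 1) * |w| ^ n := by gcongr; exact hc n
    _ = _ := by ring

lemma hasSum_powerSum (hc : ∀ n, |c n| ≤ C * (n + 1)) (hw : |w| < 1) :
    HasSum (fun n => c n * w ^ n) (powerSum c w) :=
  (summable_mul_pow_of_abs_le hc hw).hasSum

lemma powerSum_zero (c : ℕ → ℝ) : powerSum c 0 = c 0 := by
  rw [powerSum, tsum_eq_single 0 fun n hn => by simp [hn]]
  simp

lemma hasDerivAt_powerSum (hc : ∀ n, |c n| ≤ C) (hw : |w| < 1) :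
    HasDerivAt (powerSum c) (powerSum (derivCoeff c) w) w := by
  obtain ⟨r, hwr, hr⟩ := exists_between hw
  have hr0 : 0 < r := (abs_nonneg w).trans_lt hwr
  have hC : 0 ≤ C := (abs_nonneg _).trans (hc 0)
  have hbound : Summable (fun n : ℕ => C / r * (n * r ^ n)) := by
    simpa using (summable_pow_mul_geometric_of_norm_lt_one 1
      (by rwa [Real.norm_of_nonneg hr0.le])).mul_left (C / r)
  have hderiv_le : ∀ (n : ℕ) z, z ∈ Metric.ball (0 : ℝ) r →
      ‖c n * (n * z ^ (n - 1))‖ ≤ C / r * (n * r ^ n) := by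
    intro n z hz
    rw [mem_ball_zero_iff, Real.norm_eq_abs] at hz
    rcases n with _ | n
    · simp
    · rw [Real.norm_eq_abs, abs_mul, abs_mul, abs_pow, Nat.add_sub_cancel, pow_succ,
        Nat.abs_cast]
      calc |c (n + 1)| * ((n + 1 : ℕ) * |z| ^ n) ≤ C * ((n + 1 : ℕ) * r ^ n) := by
            gcongr; exact hc _
        _ = C / r * ((n + 1 : ℕ) * (r ^ n * r)) := by field_simp
  have h := hasDerivAt_tsum_of_isPreconnected hbound Metric.isOpen_ball
    (convex_ball 0 r).isPreconnected (fun n z _ => (hasDerivAt_pow n z).const_mul (c n))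
    hderiv_le (Metric.mem_ball_self hr0)
    (summable_mul_pow_of_abs_le (C := C) (fun n => (hc n).trans (by nlinarith)) (by simp))
    (by simpa using hwr)
  have hsum : Summable (fun n : ℕ => c n * (n * w ^ (n - 1))) :=
    .of_norm_bounded hbound fun n => hderiv_le n w (by simpa using hwr)
  rw [hsum.tsum_eq_zero_add] at h
  have hval : powerSum (derivCoeff c) w =
      c 0 * ((0 : ℕ) * w ^ (0 - 1))
        + ∑' n : ℕ, c (n + 1) * ((n + 1 : ℕ) * w ^ (n + 1 - 1)) := by
    simp only [powerSum, derivCoeff, Nat.add_sub_cancel, Nat.cast_add, Nat.cast_one,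
      CharP.cast_eq_zero, zero_mul, mul_zero, zero_add]
    exact tsum_congr fun n => by ring
  rw [hval]
  exact h

lemma HasSum.mul_derivCoeff {s : ℝ} (h : HasSum (fun n => derivCoeff c n * w ^ n) s) :
    HasSum (fun n => n * c n * w ^ n) (w * s) := by
  have h' : HasSum (fun n => ((n + 1 : ℕ) : ℝ) * c (n + 1) * w ^ (n + 1)) (w * s) := by
    have h₁ := h.mul_left w
    refine h₁.congr_fun fun n => ?_
    simp only [derivCoeff]
    push_cast
    ring
  simpa using (hasSum_nat_add_iff (f := fun n : ℕ => (n : ℝ) * c n * w ^ n) 1).mp h'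

end PowerSeries

namespace Gauss2F1Half

def coeff (k : ℕ) : ℝ :=
  ((∏ i ∈ Finset.range k, ((1 : ℝ) / 2 + i)) / (Nat.factorial k)) ^ 2

lemma coeff_zero : coeff 0 = 1 := by simp [coeff]

lemma coeff_nonneg (k : ℕ) : 0 ≤ coeff k := sq_nonneg _

lemma coeff_succ (k : ℕ) : coeff (k + 1) = ((k + 1 / 2) / (k + 1)) ^ 2 * coeff k := by
  simp only [coeff, Finset.prod_range_succ, Nat.factorial_succ, Nat.cast_mul]
  push_cast
  field_simp
  ring

lemma succ_mul_coeff_le_one (k : ℕ) : (k + 1) * coeff k ≤ 1 := by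
  induction k with
  | zero => simp [coeff_zero]
  | succ k ih =>
    have hk : (0 : ℝ) < k + 1 := by positivity
    have key : ((k : ℝ) + 1 / 2) ^ 2 * (k + 2) ≤ (k + 1) ^ 3 := by
      nlinarith [k.cast_nonneg (α := ℝ)]
    rw [coeff_succ]
    push_cast
    calc ((k : ℝ) + 1 + 1) * (((k + 1 / 2) / (k + 1)) ^ 2 * coeff k)
        = ((k : ℝ) + 1 / 2) ^ 2 * (k + 2) / (k + 1) ^ 3 * ((k + 1) * coeff k) := by
          field_simp; ring
      _ ≤ 1 := mul_le_one₀ ((div_le_one (by positivity)).2 key)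
          (mul_nonneg hk.le (coeff_nonneg k)) ih

lemma abs_coeff_le_one (k : ℕ) : |coeff k| ≤ 1 := by
  rw [abs_of_nonneg (coeff_nonneg k)]
  nlinarith [succ_mul_coeff_le_one k, coeff_nonneg k, k.cast_nonneg (α := ℝ)]

lemma abs_derivCoeff_coeff_le_one (k : ℕ) : |derivCoeff coeff k| ≤ 1 := by
  rw [derivCoeff, abs_of_nonneg (by positivity [coeff_nonneg (k + 1)])]
  have := succ_mul_coeff_le_one (k + 1)
  push_cast at this
  nlinarith [coeff_nonneg (k + 1)]

lemma abs_derivCoeff_derivCoeff_coeff_le (k : ℕ) :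
    |derivCoeff (derivCoeff coeff) k| ≤ k + 1 := by
  rw [derivCoeff, abs_mul, abs_of_nonneg (by positivity : (0 : ℝ) ≤ k + 1)]
  exact mul_le_of_le_one_right (by positivity) (abs_derivCoeff_coeff_le_one _)

lemma powerSum_ode {w : ℝ} (hw : |w| < 1) :
    w * (1 - w) * powerSum (derivCoeff (derivCoeff coeff)) w
      + (1 - 2 * w) * powerSum (derivCoeff coeff) w - powerSum coeff w / 4 = 0 := by
  have hA := hasSum_powerSum (c := coeff) (C := 1) (fun n => by
    linarith [abs_coeff_le_one n, n.cast_nonneg (α := ℝ)]) hw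
  have hB := hasSum_powerSum (c := derivCoeff coeff) (C := 1) (fun n => by
    linarith [abs_derivCoeff_coeff_le_one n, n.cast_nonneg (α := ℝ)]) hw
  have hC := hasSum_powerSum (c := derivCoeff (derivCoeff coeff)) (C := 1) (fun n => by
    linarith [abs_derivCoeff_derivCoeff_coeff_le n]) hw
  -- `w F'' + F' = ∑ (n+1)² aₙ₊₁ wⁿ` and `w (w F'' + F') + w F' + F/4 = ∑ (n+1/2)² aₙ wⁿ`
  -- agree termwise by `coeff_succ`.
  have hE : HasSum (fun n => derivCoeff (fun n => n * coeff n) n * w ^ n)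
      (w * powerSum (derivCoeff (derivCoeff coeff)) w + powerSum (derivCoeff coeff) w) := by
    have h := hC.mul_derivCoeff.add hB
    refine h.congr_fun fun n => ?_
    simp only [derivCoeff]
    push_cast
    ring
  have h := ((hE.sub hE.mul_derivCoeff).sub hB.mul_derivCoeff).sub (hA.div_const 4)
  have hzero : ∀ n : ℕ, derivCoeff (fun n => n * coeff n) n * w ^ n
      - n * (n * coeff n) * w ^ n - n * coeff n * w ^ n - coeff n * w ^ n / 4 = 0 := by
    intro n
    have hn : (n : ℝ) + 1 ≠ 0 := by positivity
    simp only [derivCoeff, coeff_succ]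
    push_cast
    field_simp
    ring
  linear_combination (h.congr_fun fun n => (hzero n).symm).unique hasSum_zero

end Gauss2F1Half

section Hypergeometric

open Gauss2F1Half

variable {w : ℝ}

lemma gauss2F1half_zero : gauss2F1half 0 = 1 :=
  (powerSum_zero coeff).trans coeff_zero

lemma deriv_gauss2F1half (hw : |w| < 1) :
    deriv gauss2F1half w = powerSum (derivCoeff coeff) w :=
  (hasDerivAt_powerSum abs_coeff_le_one hw).deriv

lemma hasDerivAt_deriv_gauss2F1half (hw : |w| < 1) :
    HasDerivAt (deriv gauss2F1half) (powerSum (derivCoeff (derivCoeff coeff)) w) w := by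
  have heq : deriv gauss2F1half =ᶠ[𝓝 w] powerSum (derivCoeff coeff) :=
    (continuous_abs.continuousAt.eventually_lt continuousAt_const hw).mono
      fun z hz => deriv_gauss2F1half hz
  exact (hasDerivAt_powerSum abs_derivCoeff_coeff_le_one hw).congr_of_eventuallyEq heq

lemma differentiableAt_gauss2F1half (hw : |w| < 1) : DifferentiableAt ℝ gauss2F1half w :=
  (hasDerivAt_powerSum abs_coeff_le_one hw).differentiableAt

lemma differentiableAt_deriv_gauss2F1half (hw : |w| < 1) :
    DifferentiableAt ℝ (deriv gauss2F1half) w :=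
  (hasDerivAt_deriv_gauss2F1half hw).differentiableAt

lemma gauss2F1half_ode (hw : |w| < 1) :
    w * (1 - w) * deriv (deriv gauss2F1half) w + (1 - 2 * w) * deriv gauss2F1half w
      - gauss2F1half w / 4 = 0 := by
  rw [(hasDerivAt_deriv_gauss2F1half hw).deriv, deriv_gauss2F1half hw]
  exact powerSum_ode hw

end Hypergeometric

section PartialDeriv

variable {E : Type*} [NormedAddCommGroup E] [NormedSpace ℝ E]
  {f : ℝ × ℝ → E} {p : ℝ × ℝ} {f' : E}

lemma fderiv_apply_one_zero (hf : DifferentiableAt ℝ f p)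
    (h : HasDerivAt (fun x => f (x, p.2)) f' p.1) : fderiv ℝ f p (1, 0) = f' :=
  (hf.hasFDerivAt.comp_hasDerivAt_of_eq p.1 ((hasDerivAt_id _).prodMk (hasDerivAt_const _ _))
    rfl).unique h

lemma fderiv_apply_zero_one (hf : DifferentiableAt ℝ f p)
    (h : HasDerivAt (fun y => f (p.1, y)) f' p.2) : fderiv ℝ f p (0, 1) = f' :=
  (hf.hasFDerivAt.comp_hasDerivAt_of_eq p.2 ((hasDerivAt_const _ _).prodMk (hasDerivAt_id _))
    rfl).unique h

end PartialDeriv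

lemma HasDerivAt.sqrt_div_mul_comp {σ ω g : ℝ → ℝ} {ω' g' c t : ℝ}
    (hσ : HasDerivAt σ 1 t) (hσ0 : 0 < σ t) (hc : 0 < c) (hω : HasDerivAt ω ω' t)
    (hg : HasDerivAt g g' (ω t)) :
    HasDerivAt (fun t => √(σ t / c) * g (ω t))
      (√(σ t / c) * (g (ω t) / (2 * σ t) + g' * ω')) t := by
  have hpos : 0 < σ t / c := div_pos hσ0 hc
  have hsq := ((hσ.div_const c).sqrt hpos.ne').mul (hg.comp t hω)
  refine hsq.congr_deriv ?_
  simp only [Function.comp_apply]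
  have hs : √(σ t / c) ^ 2 = σ t / c := Real.sq_sqrt hpos.le
  have hs0 : √(σ t / c) ≠ 0 := (Real.sqrt_pos.2 hpos).ne'
  have hc0 := hc.ne'
  field_simp
  rw [hs]
  field_simp

section RiemannFunction

variable {p₀ p q : ℝ × ℝ}

def riemannWFst (p₀ q : ℝ × ℝ) : ℝ :=
  -((q.2 - p₀.2) * (q.2 + p₀.1)) / ((p₀.1 + p₀.2) * (q.1 + q.2) ^ 2)

def riemannWSnd (p₀ q : ℝ × ℝ) : ℝ :=
  -((q.1 - p₀.1) * (q.1 + p₀.2)) / ((p₀.1 + p₀.2) * (q.1 + q.2) ^ 2)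

lemma hasDerivAt_riemannW_fst (h₀ : 0 < p₀.1 + p₀.2) (hq : 0 < q.1 + q.2) :
    HasDerivAt (fun x => riemannW p₀ (x, q.2)) (riemannWFst p₀ q) q.1 := by
  have h := ((((hasDerivAt_id' q.1).sub_const p₀.1).mul_const (q.2 - p₀.2)).neg).div
    (((hasDerivAt_id' q.1).add_const q.2).const_mul (p₀.1 + p₀.2)) (mul_pos h₀ hq).ne'
  refine h.congr_deriv ?_
  simp only [riemannWFst, Pi.neg_apply]
  field_simp
  ring

lemma hasDerivAt_riemannW_snd (h₀ : 0 < p₀.1 + p₀.2) (hq : 0 < q.1 + q.2) :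
    HasDerivAt (fun y => riemannW p₀ (q.1, y)) (riemannWSnd p₀ q) q.2 := by
  have h := ((((hasDerivAt_id' q.2).sub_const p₀.2).const_mul (q.1 - p₀.1)).neg).div
    (((hasDerivAt_id' q.2).const_add q.1).const_mul (p₀.1 + p₀.2)) (mul_pos h₀ hq).ne'
  refine h.congr_deriv ?_
  simp only [riemannWSnd, Pi.neg_apply]
  field_simp
  ring

lemma hasDerivAt_riemannWFst_snd (h₀ : 0 < p₀.1 + p₀.2) (hq : 0 < q.1 + q.2) :
    HasDerivAt (fun y => riemannWFst p₀ (q.1, y))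
      ((2 * riemannW p₀ q - 1) / (q.1 + q.2) ^ 2) q.2 := by
  have h := ((((hasDerivAt_id' q.2).sub_const p₀.2).mul
      ((hasDerivAt_id' q.2).add_const p₀.1)).neg).div
    ((((hasDerivAt_id' q.2).const_add q.1).pow 2).const_mul (p₀.1 + p₀.2))
    (mul_pos h₀ (pow_pos hq 2)).ne'
  refine h.congr_deriv ?_
  simp only [riemannW, Pi.neg_apply, Pi.mul_apply, Pi.pow_apply]
  field_simp
  ring

lemma riemannWFst_mul_riemannWSnd (h₀ : 0 < p₀.1 + p₀.2) (hq : 0 < q.1 + q.2) :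
    riemannWFst p₀ q * riemannWSnd p₀ q
      = -(riemannW p₀ q * (1 - riemannW p₀ q)) / (q.1 + q.2) ^ 2 := by
  simp only [riemannWFst, riemannWSnd, riemannW]
  field_simp
  ring

def riemannRFst (p₀ q : ℝ × ℝ) : ℝ :=
  riemannR p₀ q / (2 * (q.1 + q.2))
    + √((q.1 + q.2) / (p₀.1 + p₀.2)) * deriv gauss2F1half (riemannW p₀ q)
      * riemannWFst p₀ q

def riemannRSnd (p₀ q : ℝ × ℝ) : ℝ :=
  riemannR p₀ q / (2 * (q.1 + q.2))
    + √((q.1 + q.2) / (p₀.1 + p₀.2)) * deriv gauss2F1half (riemannW p₀ q)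
      * riemannWSnd p₀ q

lemma hasDerivAt_riemannR_fst (h₀ : 0 < p₀.1 + p₀.2) (hq : 0 < q.1 + q.2)
    (hw : |riemannW p₀ q| < 1) :
    HasDerivAt (fun x => riemannR p₀ (x, q.2)) (riemannRFst p₀ q) q.1 := by
  refine (((hasDerivAt_id' q.1).add_const q.2).sqrt_div_mul_comp hq h₀
    (hasDerivAt_riemannW_fst h₀ hq) (differentiableAt_gauss2F1half hw).hasDerivAt).congr_deriv ?_
  simp only [riemannRFst, riemannR]
  ring

lemma hasDerivAt_riemannR_snd (h₀ : 0 < p₀.1 + p₀.2) (hq : 0 < q.1 + q.2)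
    (hw : |riemannW p₀ q| < 1) :
    HasDerivAt (fun y => riemannR p₀ (q.1, y)) (riemannRSnd p₀ q) q.2 := by
  refine (((hasDerivAt_id' q.2).const_add q.1).sqrt_div_mul_comp hq h₀
    (hasDerivAt_riemannW_snd h₀ hq) (differentiableAt_gauss2F1half hw).hasDerivAt).congr_deriv ?_
  simp only [riemannRSnd, riemannR]
  ring

lemma differentiableAt_riemannW (h₀ : 0 < p₀.1 + p₀.2) (hq : 0 < q.1 + q.2) :
    DifferentiableAt ℝ (riemannW p₀) q := by
  have := (mul_pos h₀ hq).ne'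
  unfold riemannW
  fun_prop (disch := assumption)

lemma differentiableAt_riemannWFst (h₀ : 0 < p₀.1 + p₀.2) (hq : 0 < q.1 + q.2) :
    DifferentiableAt ℝ (riemannWFst p₀) q := by
  have := (mul_pos h₀ (pow_pos hq 2)).ne'
  unfold riemannWFst
  fun_prop (disch := assumption)

lemma differentiableAt_sqrt_mul_comp_riemannW {g : ℝ → ℝ}
    (hg : DifferentiableAt ℝ g (riemannW p₀ q)) (h₀ : 0 < p₀.1 + p₀.2)
    (hq : 0 < q.1 + q.2) :
    DifferentiableAt ℝ (fun q => √((q.1 + q.2) / (p₀.1 + p₀.2)) * g (riemannW p₀ q)) q := by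
  have hs : DifferentiableAt ℝ (fun q : ℝ × ℝ => (q.1 + q.2) / (p₀.1 + p₀.2)) q := by fun_prop
  exact (hs.sqrt (div_pos hq h₀).ne').mul (hg.comp q (differentiableAt_riemannW h₀ hq))

lemma differentiableAt_riemannR (h₀ : 0 < p₀.1 + p₀.2) (hq : 0 < q.1 + q.2)
    (hw : |riemannW p₀ q| < 1) : DifferentiableAt ℝ (riemannR p₀) q :=
  differentiableAt_sqrt_mul_comp_riemannW (differentiableAt_gauss2F1half hw) h₀ hq

lemma differentiableAt_riemannRFst (h₀ : 0 < p₀.1 + p₀.2) (hq : 0 < q.1 + q.2)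
    (hw : |riemannW p₀ q| < 1) : DifferentiableAt ℝ (riemannRFst p₀) q := by
  have hR := differentiableAt_riemannR h₀ hq hw
  have hK := differentiableAt_sqrt_mul_comp_riemannW
    (differentiableAt_deriv_gauss2F1half hw) h₀ hq
  have hWFst := differentiableAt_riemannWFst h₀ hq
  have hs : 2 * (q.1 + q.2) ≠ 0 := (mul_pos two_pos hq).ne'
  unfold riemannRFst
  fun_prop (disch := assumption)

lemma fderiv_riemannR_one_zero (h₀ : 0 < p₀.1 + p₀.2) (hq : 0 < q.1 + q.2)
    (hw : |riemannW p₀ q| < 1) : fderiv ℝ (riemannR p₀) q (1, 0) = riemannRFst p₀ q :=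
  fderiv_apply_one_zero (differentiableAt_riemannR h₀ hq hw) (hasDerivAt_riemannR_fst h₀ hq hw)

lemma fderiv_riemannR_zero_one (h₀ : 0 < p₀.1 + p₀.2) (hq : 0 < q.1 + q.2)
    (hw : |riemannW p₀ q| < 1) : fderiv ℝ (riemannR p₀) q (0, 1) = riemannRSnd p₀ q :=
  fderiv_apply_zero_one (differentiableAt_riemannR h₀ hq hw) (hasDerivAt_riemannR_snd h₀ hq hw)

lemma eventually_pos_and_abs_riemannW_lt_one (h₀ : 0 < p₀.1 + p₀.2) (hp : 0 < p.1 + p.2)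
    (hw : |riemannW p₀ p| < 1) : ∀ᶠ q in 𝓝 p, 0 < q.1 + q.2 ∧ |riemannW p₀ q| < 1 :=
  (continuousAt_const.eventually_lt (g := fun q : ℝ × ℝ => q.1 + q.2) (by fun_prop) hp).and
    ((continuous_abs.continuousAt.comp (differentiableAt_riemannW h₀ hp).continuousAt
      ).eventually_lt continuousAt_const hw)

lemma riemannR_adjoint_eq_zero (h₀ : 0 < p₀.1 + p₀.2) (hp : 0 < p.1 + p.2)
    (hw : |riemannW p₀ p| < 1) :
    fderiv ℝ (fun q : ℝ × ℝ => fderiv ℝ (riemannR p₀) q (1, 0)) p (0, 1)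
      - fderiv ℝ (fun q : ℝ × ℝ => riemannR p₀ q / (2 * (q.1 + q.2))) p (1, 0)
      - fderiv ℝ (fun q : ℝ × ℝ => riemannR p₀ q / (2 * (q.1 + q.2))) p (0, 1) = 0 := by
  have hFst :
      (fun q : ℝ × ℝ => fderiv ℝ (riemannR p₀) q (1, 0)) =ᶠ[𝓝 p] riemannRFst p₀ :=
    (eventually_pos_and_abs_riemannW_lt_one h₀ hp hw).mono
      fun q hq => fderiv_riemannR_one_zero h₀ hq.1 hq.2
  have hs : 2 * (p.1 + p.2) ≠ 0 := (mul_pos two_pos hp).ne'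
  have hR := differentiableAt_riemannR h₀ hp hw
  have hRdiv :
      DifferentiableAt ℝ (fun q : ℝ × ℝ => riemannR p₀ q / (2 * (q.1 + q.2))) p := by
    fun_prop (disch := assumption)
  have hRdiv_fst := (hasDerivAt_riemannR_fst h₀ hp hw).div
    (((hasDerivAt_id' p.1).add_const p.2).const_mul 2) hs
  have hRdiv_snd := (hasDerivAt_riemannR_snd h₀ hp hw).div
    (((hasDerivAt_id' p.2).const_add p.1).const_mul 2) hs
  have hK : HasDerivAt (fun y => √((p.1 + y) / (p₀.1 + p₀.2)) *
        deriv gauss2F1half (riemannW p₀ (p.1, y)))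
      (√((p.1 + p.2) / (p₀.1 + p₀.2))
        * (deriv gauss2F1half (riemannW p₀ p) / (2 * (p.1 + p.2))
          + deriv (deriv gauss2F1half) (riemannW p₀ p) * riemannWSnd p₀ p)) p.2 :=
    ((hasDerivAt_id' p.2).const_add p.1).sqrt_div_mul_comp hp h₀ (hasDerivAt_riemannW_snd h₀ hp)
      (differentiableAt_deriv_gauss2F1half hw).hasDerivAt
  have hRFst_snd : HasDerivAt (fun y => riemannRFst p₀ (p.1, y)) _ p.2 :=
    (hRdiv_snd).add (hK.mul (hasDerivAt_riemannWFst_snd h₀ hp))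
  rw [hFst.fderiv_eq, fderiv_apply_zero_one (differentiableAt_riemannRFst h₀ hp hw) hRFst_snd,
    fderiv_apply_one_zero hRdiv hRdiv_fst, fderiv_apply_zero_one hRdiv hRdiv_snd]
  simp only [riemannRFst, riemannRSnd, riemannR, Prod.mk.eta]
  linear_combination (norm := (field_simp; ring))
    (-√((p.1 + p.2) / (p₀.1 + p₀.2)) / (p.1 + p.2) ^ 2) * gauss2F1half_ode hw
      + √((p.1 + p.2) / (p₀.1 + p₀.2)) * deriv (deriv gauss2F1half) (riemannW p₀ p)
        * riemannWFst_mul_riemannWSnd h₀ hp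

end RiemannFunction

end

/-- The Riemann function for `L(φ) = ∂_{ξη}φ + (∂_ξφ + ∂_ηφ)/(2(ξ+η))` satisfies:
(a) `L*R = 0` in `(ξ,η)` on the domain `{ξ+η > 0, |w| < 1}` (with `ξ₀+η₀ > 0`), where
`L*(ψ) = ∂_{ξη}ψ − ∂_ξ(ψ/(2(ξ+η))) − ∂_η(ψ/(2(ξ+η)))`;
(b) on the characteristics `η = η₀` and `ξ = ξ₀`, `∂_ξ R = R/(2(ξ+η))` resp.
`∂_η R = R/(2(ξ+η))`; and (c) `R(ξ₀,η₀;ξ₀,η₀) = 1`. -/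
theorem stmt17 (p₀ : ℝ × ℝ) (h₀ : 0 < p₀.1 + p₀.2) :
    (∀ p : ℝ × ℝ, 0 < p.1 + p.2 → |riemannW p₀ p| < 1 →
      fderiv ℝ (fun q : ℝ × ℝ => fderiv ℝ (riemannR p₀) q (1, 0)) p (0, 1)
        - fderiv ℝ (fun q : ℝ × ℝ => riemannR p₀ q / (2 * (q.1 + q.2))) p (1, 0)
        - fderiv ℝ (fun q : ℝ × ℝ => riemannR p₀ q / (2 * (q.1 + q.2))) p (0, 1) = 0) ∧
    (∀ ξ : ℝ, 0 < ξ + p₀.2 → |riemannW p₀ (ξ, p₀.2)| < 1 →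
      fderiv ℝ (riemannR p₀) (ξ, p₀.2) (1, 0)
        = riemannR p₀ (ξ, p₀.2) / (2 * (ξ + p₀.2))) ∧
    (∀ η : ℝ, 0 < p₀.1 + η → |riemannW p₀ (p₀.1, η)| < 1 →
      fderiv ℝ (riemannR p₀) (p₀.1, η) (0, 1)
        = riemannR p₀ (p₀.1, η) / (2 * (p₀.1 + η))) ∧
    riemannR p₀ p₀ = 1 := by
  refine ⟨fun p hp hw => riemannR_adjoint_eq_zero h₀ hp hw, fun ξ hξ hw => ?_,
    fun η hη hw => ?_, ?_⟩
  · rw [fderiv_riemannR_one_zero (q := (ξ, p₀.2)) h₀ hξ hw]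
    simp [riemannRFst, riemannWFst]
  · rw [fderiv_riemannR_zero_one (q := (p₀.1, η)) h₀ hη hw]
    simp [riemannRSnd, riemannWSnd]
  · simp [riemannR, riemannW, div_self h₀.ne', gauss2F1half_zero]
end
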